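/- arXiv:1411.3857 — 8 statements merged into one kernel-verified Lean document; each statement's English description precedes it below -/
import Mathlib

section
/- For every α∈ℝ, every ε∈ℝ, and every conditional pmf Q from 𝒴 to 𝒳 satisfying the energy constraint ε(Q)=ε, the conditional entropy satisfies H(Q) ≤ Σ_y P(y) ln ζ(α|y) + αε, and equality holds when Q=Q_α (for the value ε=ε(Q_α)). -/
open Real Finset Filter

/-- `Q : Y → X → ℝ` is a conditional pmf from `Y` to `X`. -/
def IsCondPMF {X Y : Type*} [Fintype X] (Q : Y → X → ℝ) : Prop :=
  (∀ y x, 0 ≤ Q y x) ∧ ∀ y, ∑ x, Q y x = 1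

/-- The marginal `P(y) = Σ_x P(x,y)`. -/
noncomputable def Pmarg {X Y : Type*} [Fintype X] (P : X → Y → ℝ) (y : Y) : ℝ := ∑ x, P x y

/-- `ζ(α|y) = Σ_x P(x,y)^α`. -/
noncomputable def zetaFn {X Y : Type*} [Fintype X] (P : X → Y → ℝ) (α : ℝ) (y : Y) : ℝ :=
  ∑ x, P x y ^ α

/-- The tilted conditional distribution `Q_α(x|y) = P(x,y)^α / ζ(α|y)`. -/
noncomputable def Qtilt {X Y : Type*} [Fintype X] (P : X → Y → ℝ) (α : ℝ) (y : Y) (x : X) : ℝ :=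
  P x y ^ α / zetaFn P α y

/-- The energy `ε(Q) = −Σ_{x,y} P(y) Q(x|y) ln P(x,y)`. -/
noncomputable def condEnergy {X Y : Type*} [Fintype X] [Fintype Y] (P : X → Y → ℝ)
    (Q : Y → X → ℝ) : ℝ :=
  -∑ y, ∑ x, Pmarg P y * Q y x * Real.log (P x y)

/-- The conditional entropy `H(Q) = −Σ_{x,y} P(y) Q(x|y) ln Q(x|y)`. -/
noncomputable def condEnt {X Y : Type*} [Fintype X] [Fintype Y] (P : X → Y → ℝ)
    (Q : Y → X → ℝ) : ℝ :=
  -∑ y, ∑ x, Pmarg P y * Q y x * Real.log (Q y x)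

/-- for every `α`, every `ε` and every conditional pmf `Q` with `ε(Q) = ε`,
`H(Q) ≤ Σ_y P(y) ln ζ(α|y) + α ε`, with equality for `Q = Q_α` (at `ε = ε(Q_α)`). -/
theorem stmt1 {X Y : Type*} [Fintype X] [Fintype Y]
    (P : X → Y → ℝ) (hpos : ∀ x y, 0 < P x y) (hsum : ∑ x, ∑ y, P x y = 1) :
    (∀ (α ε : ℝ) (Q : Y → X → ℝ), IsCondPMF Q → condEnergy P Q = ε →
      condEnt P Q ≤ ∑ y, Pmarg P y * Real.log (zetaFn P α y) + α * ε) ∧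
    (∀ α : ℝ, IsCondPMF (Qtilt P α) ∧
      condEnt P (Qtilt P α) =
        ∑ y, Pmarg P y * Real.log (zetaFn P α y) + α * condEnergy P (Qtilt P α)) := by
  have hXne : Nonempty X := by
    by_contra h
    rw [not_nonempty_iff] at h
    rw [Finset.univ_eq_empty, Finset.sum_empty] at hsum
    norm_num at hsum
  have hzpos : ∀ α y, 0 < zetaFn P α y := fun α y =>
    Finset.sum_pos (fun x _ => Real.rpow_pos_of_pos (hpos x y) α) Finset.univ_nonempty
  have hMnn : ∀ y, 0 ≤ Pmarg P y := fun y =>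
    Finset.sum_nonneg fun x _ => (hpos x y).le
  -- Gibbs per-y inequality
  have gibbs : ∀ (α : ℝ) (y : Y) (Q : Y → X → ℝ), IsCondPMF Q →
      ∑ x, Q y x * (α * Real.log (P x y) - Real.log (Q y x)) ≤ Real.log (zetaFn P α y) := by
    intro α y Q hQ
    have key : ∀ x ∈ (Finset.univ : Finset X),
        Q y x * (α * Real.log (P x y) - Real.log (Q y x)) - Q y x * Real.log (zetaFn P α y)
          ≤ P x y ^ α / zetaFn P α y - Q y x := by
      intro x _
      rcases eq_or_lt_of_le (hQ.1 y x) with h | h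
      · rw [← h]
        have hnn : (0:ℝ) ≤ P x y ^ α / zetaFn P α y :=
          div_nonneg (Real.rpow_pos_of_pos (hpos x y) α).le (hzpos α y).le
        simpa using hnn
      · have hz := hzpos α y
        have hpa := Real.rpow_pos_of_pos (hpos x y) α
        have heq : α * Real.log (P x y) - Real.log (Q y x) - Real.log (zetaFn P α y)
            = Real.log (P x y ^ α / (zetaFn P α y * Q y x)) := by
          rw [Real.log_div hpa.ne' (by positivity), Real.log_mul hz.ne' h.ne',
            Real.log_rpow (hpos x y)]
          ring
        have hle := Real.log_le_sub_one_of_pos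
          (show 0 < P x y ^ α / (zetaFn P α y * Q y x) by positivity)
        calc Q y x * (α * Real.log (P x y) - Real.log (Q y x))
              - Q y x * Real.log (zetaFn P α y)
            = Q y x * Real.log (P x y ^ α / (zetaFn P α y * Q y x)) := by
              rw [← heq]; ring
          _ ≤ Q y x * (P x y ^ α / (zetaFn P α y * Q y x) - 1) :=
              mul_le_mul_of_nonneg_left hle h.le
          _ = P x y ^ α / zetaFn P α y - Q y x := by
              field_simp
    have hsum1 := Finset.sum_le_sum key
    have e1 : ∑ x, (Q y x * (α * Real.log (P x y) - Real.log (Q y x))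
        - Q y x * Real.log (zetaFn P α y))
        = (∑ x, Q y x * (α * Real.log (P x y) - Real.log (Q y x)))
          - Real.log (zetaFn P α y) := by
      rw [Finset.sum_sub_distrib, ← Finset.sum_mul, hQ.2 y, one_mul]
    have e2 : ∑ x, (P x y ^ α / zetaFn P α y - Q y x) = 0 := by
      rw [Finset.sum_sub_distrib, ← Finset.sum_div, hQ.2 y]
      have : (∑ x, P x y ^ α) = zetaFn P α y := rfl
      rw [this, div_self (hzpos α y).ne']
      ring
    rw [e1, e2] at hsum1
    linarith
  constructor
  · intro α ε Q hQ hE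
    subst hE
    have main : ∑ y, Pmarg P y *
        (∑ x, Q y x * (α * Real.log (P x y) - Real.log (Q y x)))
        ≤ ∑ y, Pmarg P y * Real.log (zetaFn P α y) :=
      Finset.sum_le_sum fun y _ =>
        mul_le_mul_of_nonneg_left (gibbs α y Q hQ) (hMnn y)
    have expand : ∑ y, Pmarg P y *
        (∑ x, Q y x * (α * Real.log (P x y) - Real.log (Q y x)))
        = condEnt P Q - α * condEnergy P Q := by
      unfold condEnt condEnergy
      have hy : ∀ y ∈ (Finset.univ : Finset Y), Pmarg P y *
          (∑ x, Q y x * (α * Real.log (P x y) - Real.log (Q y x)))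
          = α * (∑ x, Pmarg P y * Q y x * Real.log (P x y))
            - ∑ x, Pmarg P y * Q y x * Real.log (Q y x) := by
        intro y _
        rw [Finset.mul_sum, Finset.mul_sum, ← Finset.sum_sub_distrib]
        exact Finset.sum_congr rfl fun x _ => by ring
      rw [Finset.sum_congr rfl hy, Finset.sum_sub_distrib, ← Finset.mul_sum]
      ring
    linarith [main, expand.le]
  · intro α
    have hpmf : IsCondPMF (Qtilt P α) := by
      constructor
      · intro y x
        exact div_nonneg (Real.rpow_pos_of_pos (hpos x y) α).le (hzpos α y).le
      · intro y
        unfold Qtilt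
        rw [← Finset.sum_div]
        exact div_self (hzpos α y).ne'
    refine ⟨hpmf, ?_⟩
    have hlog : ∀ y x, Real.log (Qtilt P α y x)
        = α * Real.log (P x y) - Real.log (zetaFn P α y) := by
      intro y x
      unfold Qtilt
      rw [Real.log_div (Real.rpow_pos_of_pos (hpos x y) α).ne' (hzpos α y).ne',
        Real.log_rpow (hpos x y)]
    unfold condEnt condEnergy
    have hy : ∀ y ∈ (Finset.univ : Finset Y),
        ∑ x, Pmarg P y * Qtilt P α y x * Real.log (Qtilt P α y x)
        = α * (∑ x, Pmarg P y * Qtilt P α y x * Real.log (P x y))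
          - Pmarg P y * Real.log (zetaFn P α y) := by
      intro y _
      calc ∑ x, Pmarg P y * Qtilt P α y x * Real.log (Qtilt P α y x)
          = ∑ x, (α * (Pmarg P y * Qtilt P α y x * Real.log (P x y))
            - (Pmarg P y * Real.log (zetaFn P α y)) * Qtilt P α y x) :=
            Finset.sum_congr rfl fun x _ => by rw [hlog y x]; ring
        _ = α * (∑ x, Pmarg P y * Qtilt P α y x * Real.log (P x y))
            - (Pmarg P y * Real.log (zetaFn P α y)) * ∑ x, Qtilt P α y x := by
            rw [Finset.sum_sub_distrib, ← Finset.mul_sum, ← Finset.mul_sum]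
        _ = α * (∑ x, Pmarg P y * Qtilt P α y x * Real.log (P x y))
            - Pmarg P y * Real.log (zetaFn P α y) := by
            rw [hpmf.2 y]; ring
    rw [Finset.sum_congr rfl hy, Finset.sum_sub_distrib, ← Finset.mul_sum]
    ring
end

section
/- If α∈ℝ and ε=ε(Q_α), then the constrained maximum of conditional entropy at energy level ε is achieved by Q_α and equals s(ε) = Σ_y P(y) ln ζ(α|y) + αε. -/
open Real Finset Filter

/-- The entropy function `s(ε) = max{H(Q) : Q a conditional pmf with ε(Q) = ε}`. -/
noncomputable def sFun {X Y : Type*} [Fintype X] [Fintype Y] (P : X → Y → ℝ) (ε : ℝ) : ℝ :=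
  sSup {h : ℝ | ∃ Q : Y → X → ℝ, IsCondPMF Q ∧ condEnergy P Q = ε ∧ h = condEnt P Q}

/-- The joint entropy `H(X,Y) = −Σ_{x,y} P(x,y) ln P(x,y)`. -/
noncomputable def entXY {X Y : Type*} [Fintype X] [Fintype Y] (P : X → Y → ℝ) : ℝ :=
  -∑ x, ∑ y, P x y * Real.log (P x y)

/-- The conditional entropy `H(X|Y) = −Σ_{x,y} P(x,y) ln (P(x,y)/P(y))`. -/
noncomputable def entXgY {X Y : Type*} [Fintype X] [Fintype Y] (P : X → Y → ℝ) : ℝ :=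
  -∑ x, ∑ y, P x y * Real.log (P x y / Pmarg P y)

lemma gibbs' {X : Type*} [Fintype X] (q p : X → ℝ) (hq : ∀ x, 0 ≤ q x)
    (hp : ∀ x, 0 < p x) (hq1 : ∑ x, q x = 1) (hp1 : ∑ x, p x ≤ 1) :
    ∑ x, q x * Real.log (p x) ≤ ∑ x, q x * Real.log (q x) := by
  have key : ∀ x, q x * Real.log (p x) - q x * Real.log (q x) ≤ p x - q x := by
    intro x
    rcases eq_or_lt_of_le (hq x) with h | h
    · simp [← h]; exact (hp x).le
    · have hlog : Real.log (p x) - Real.log (q x) = Real.log (p x / q x) :=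
        (Real.log_div (hp x).ne' h.ne').symm
      calc q x * Real.log (p x) - q x * Real.log (q x)
          = q x * Real.log (p x / q x) := by rw [← hlog]; ring
        _ ≤ q x * (p x / q x - 1) := by
            refine mul_le_mul_of_nonneg_left ?_ h.le
            exact Real.log_le_sub_one_of_pos (div_pos (hp x) h)
        _ = p x - q x := by field_simp
  have h2 : ∑ x, (q x * Real.log (p x) - q x * Real.log (q x)) ≤ ∑ x, (p x - q x) :=
    Finset.sum_le_sum (fun x _ => key x)
  rw [Finset.sum_sub_distrib, Finset.sum_sub_distrib] at h2
  linarith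

lemma keycomp {X Y : Type*} [Fintype X] [Fintype Y] [Nonempty X] (P : X → Y → ℝ)
    (hpos : ∀ x y, 0 < P x y) (α : ℝ) (Q : Y → X → ℝ) (hQ1 : ∀ y, ∑ x, Q y x = 1) :
    -∑ y, ∑ x, Pmarg P y * Q y x * Real.log (Qtilt P α y x)
      = ∑ y, Pmarg P y * Real.log (zetaFn P α y) + α * condEnergy P Q := by
  have hz : ∀ y, 0 < zetaFn P α y := fun y =>
    Finset.sum_pos (fun x _ => Real.rpow_pos_of_pos (hpos x y) α) Finset.univ_nonempty
  have hlogQ : ∀ y x, Real.log (Qtilt P α y x)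
      = α * Real.log (P x y) - Real.log (zetaFn P α y) := by
    intro y x
    simp only [Qtilt]
    rw [Real.log_div (Real.rpow_pos_of_pos (hpos x y) α).ne' (hz y).ne',
      Real.log_rpow (hpos x y)]
  have hy : ∀ y, ∑ x, Pmarg P y * Q y x * Real.log (Qtilt P α y x)
      = α * (∑ x, Pmarg P y * Q y x * Real.log (P x y))
        - Pmarg P y * Real.log (zetaFn P α y) := by
    intro y
    have h1 : ∀ x, Pmarg P y * Q y x * Real.log (Qtilt P α y x)
        = α * (Pmarg P y * Q y x * Real.log (P x y))
          - Pmarg P y * Real.log (zetaFn P α y) * Q y x := by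
      intro x; rw [hlogQ y x]; ring
    rw [Finset.sum_congr rfl fun x _ => h1 x, Finset.sum_sub_distrib,
      ← Finset.mul_sum, ← Finset.mul_sum, hQ1 y, mul_one]
  rw [Finset.sum_congr rfl fun y _ => hy y, Finset.sum_sub_distrib, ← Finset.mul_sum]
  simp only [condEnergy]
  ring

/-- for `ε = ε(Q_α)`, the constrained maximum of conditional entropy at energy
level `ε` is achieved by `Q_α` and equals `s(ε) = Σ_y P(y) ln ζ(α|y) + α ε`. -/
theorem stmt2 {X Y : Type*} [Fintype X] [Fintype Y]
    (P : X → Y → ℝ) (hpos : ∀ x y, 0 < P x y) (hsum : ∑ x, ∑ y, P x y = 1) (α : ℝ) :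
    sFun P (condEnergy P (Qtilt P α)) =
      ∑ y, Pmarg P y * Real.log (zetaFn P α y) + α * condEnergy P (Qtilt P α) ∧
    IsCondPMF (Qtilt P α) ∧
    condEnt P (Qtilt P α) = sFun P (condEnergy P (Qtilt P α)) := by
  rcases isEmpty_or_nonempty X with hX | hX
  · simp [Finset.univ_eq_empty] at hsum
  have hz : ∀ y, 0 < zetaFn P α y := fun y =>
    Finset.sum_pos (fun x _ => Real.rpow_pos_of_pos (hpos x y) α) Finset.univ_nonempty
  have hPm : ∀ y, 0 ≤ Pmarg P y := fun y => Finset.sum_nonneg fun x _ => (hpos x y).le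
  have hQpos : ∀ y x, 0 < Qtilt P α y x := fun y x =>
    div_pos (Real.rpow_pos_of_pos (hpos x y) α) (hz y)
  have hQsum : ∀ y, ∑ x, Qtilt P α y x = 1 := by
    intro y
    simp only [Qtilt]
    rw [← Finset.sum_div]
    exact div_self (hz y).ne'
  have hQpmf : IsCondPMF (Qtilt P α) := ⟨fun y x => (hQpos y x).le, hQsum⟩
  have heq : condEnt P (Qtilt P α)
      = ∑ y, Pmarg P y * Real.log (zetaFn P α y) + α * condEnergy P (Qtilt P α) :=
    keycomp P hpos α (Qtilt P α) hQsum
  have hbound : ∀ Q : Y → X → ℝ, IsCondPMF Q →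
      condEnt P Q ≤ ∑ y, Pmarg P y * Real.log (zetaFn P α y) + α * condEnergy P Q := by
    intro Q hQ
    have hle : ∀ y, ∑ x, Pmarg P y * Q y x * Real.log (Qtilt P α y x)
        ≤ ∑ x, Pmarg P y * Q y x * Real.log (Q y x) := by
      intro y
      have hg : ∑ x, Q y x * Real.log (Qtilt P α y x) ≤ ∑ x, Q y x * Real.log (Q y x) :=
        gibbs' (Q y) (Qtilt P α y) (hQ.1 y) (hQpos y) (hQ.2 y) (le_of_eq (hQsum y))
      calc ∑ x, Pmarg P y * Q y x * Real.log (Qtilt P α y x)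
          = Pmarg P y * ∑ x, Q y x * Real.log (Qtilt P α y x) := by
            rw [Finset.mul_sum]; exact Finset.sum_congr rfl fun x _ => mul_assoc _ _ _
        _ ≤ Pmarg P y * ∑ x, Q y x * Real.log (Q y x) :=
            mul_le_mul_of_nonneg_left hg (hPm y)
        _ = ∑ x, Pmarg P y * Q y x * Real.log (Q y x) := by
            rw [Finset.mul_sum]; exact Finset.sum_congr rfl fun x _ => (mul_assoc _ _ _).symm
    have hsum2 : ∑ y, ∑ x, Pmarg P y * Q y x * Real.log (Qtilt P α y x)
        ≤ ∑ y, ∑ x, Pmarg P y * Q y x * Real.log (Q y x) :=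
      Finset.sum_le_sum fun y _ => hle y
    have := keycomp P hpos α Q hQ.2
    simp only [condEnt]
    linarith
  have hgreat : IsGreatest
      {h : ℝ | ∃ Q : Y → X → ℝ, IsCondPMF Q ∧
        condEnergy P Q = condEnergy P (Qtilt P α) ∧ h = condEnt P Q}
      (condEnt P (Qtilt P α)) := by
    constructor
    · exact ⟨Qtilt P α, hQpmf, rfl, rfl⟩
    · rintro h ⟨Q, hQ, hE, rfl⟩
      calc condEnt P Q
          ≤ ∑ y, Pmarg P y * Real.log (zetaFn P α y) + α * condEnergy P Q := hbound Q hQ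
        _ = ∑ y, Pmarg P y * Real.log (zetaFn P α y) + α * condEnergy P (Qtilt P α) := by
            rw [hE]
        _ = condEnt P (Qtilt P α) := heq.symm
  have hs : sFun P (condEnergy P (Qtilt P α)) = condEnt P (Qtilt P α) := hgreat.csSup_eq
  exact ⟨hs.trans heq, hQpmf, hs.symm⟩
end

section
/- The entropy function evaluated at the joint entropy equals the conditional entropy: s(H(X,Y)) = H(X|Y), i.e., the maximum of H(Q) over conditional pmfs Q with ε(Q)=H(X,Y) equals H(X|Y), and it is achieved by Q(x|y)=P(x|y). -/
open Real Finset Filter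

/-- The conditional distribution `Q(x|y) = P(x|y) = P(x,y)/P(y)`. -/
noncomputable def condOfP {X Y : Type*} [Fintype X] (P : X → Y → ℝ) (y : Y) (x : X) : ℝ :=
  P x y / Pmarg P y

lemma log_ineq_aux {a b : ℝ} (ha : 0 ≤ a) (hb : 0 < b) :
    a - b ≤ a * Real.log a - a * Real.log b := by
  rcases eq_or_lt_of_le ha with h | h
  · simp [← h]
    linarith
  · have h1 : Real.log (b / a) ≤ b / a - 1 := Real.log_le_sub_one_of_pos (by positivity)
    have h2 : Real.log (b / a) = Real.log b - Real.log a := Real.log_div hb.ne' h.ne'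
    have h3 : a * Real.log (b / a) ≤ a * (b / a - 1) := mul_le_mul_of_nonneg_left h1 h.le
    have h4 : a * (b / a - 1) = b - a := by field_simp
    rw [h2, h4] at h3
    nlinarith

theorem stmt3 {X Y : Type*} [Fintype X] [Fintype Y]
    (P : X → Y → ℝ) (hpos : ∀ x y, 0 < P x y) (hsum : ∑ x, ∑ y, P x y = 1) :
    sFun P (entXY P) = entXgY P ∧
    IsCondPMF (condOfP P) ∧
    condEnergy P (condOfP P) = entXY P ∧
    condEnt P (condOfP P) = entXgY P := by
  -- X nonempty
  have hX : Nonempty X := by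
    by_contra h
    rw [not_nonempty_iff] at h
    simp [Finset.univ_eq_empty] at hsum
  have hmarg : ∀ y, 0 < Pmarg P y := fun y =>
    Finset.sum_pos (fun x _ => hpos x y) Finset.univ_nonempty
  -- condOfP is a conditional pmf
  have hcond : IsCondPMF (condOfP P) := by
    constructor
    · intro y x
      exact div_nonneg (hpos x y).le (hmarg y).le
    · intro y
      simp only [condOfP]
      rw [← Finset.sum_div]
      exact div_self (hmarg y).ne'
  -- Pmarg * condOfP = P
  have hmc : ∀ y x, Pmarg P y * condOfP P y x = P x y := by
    intro y x
    rw [condOfP, mul_div_cancel₀ _ (hmarg y).ne']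
  -- energy of condOfP
  have henergy : condEnergy P (condOfP P) = entXY P := by
    rw [condEnergy, entXY, Finset.sum_comm]
    congr 1
    exact Finset.sum_congr rfl fun y _ => Finset.sum_congr rfl fun x _ => by rw [hmc]
  -- entropy of condOfP
  have hent : condEnt P (condOfP P) = entXgY P := by
    rw [condEnt, entXgY, Finset.sum_comm]
    congr 1
    exact Finset.sum_congr rfl fun y _ => Finset.sum_congr rfl fun x _ => by
      rw [hmc]; rfl
  -- key relation: entXgY = entXY + HY
  have hsplit : entXgY P = entXY P + ∑ y, Pmarg P y * Real.log (Pmarg P y) := by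
    rw [entXgY, entXY]
    have : ∀ x y, P x y * Real.log (P x y / Pmarg P y)
        = P x y * Real.log (P x y) - P x y * Real.log (Pmarg P y) := by
      intro x y
      rw [Real.log_div (hpos x y).ne' (hmarg y).ne']
      ring
    simp_rw [this, Finset.sum_sub_distrib]
    rw [Finset.sum_comm (f := fun x y => P x y * Real.log (Pmarg P y))]
    simp_rw [← Finset.sum_mul]
    ring_nf
    rfl
  -- upper bound
  have hub : ∀ Q : Y → X → ℝ, IsCondPMF Q → condEnergy P Q = entXY P →
      condEnt P Q ≤ entXgY P := by
    intro Q ⟨hQ0, hQ1⟩ hE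
    -- pointwise Gibbs per y
    have key : ∀ y, ∑ x, Q y x * Real.log (P x y / Pmarg P y)
        ≤ ∑ x, Q y x * Real.log (Q y x) := by
      intro y
      have h0 : ∑ x, (Q y x - condOfP P y x) = 0 := by
        rw [Finset.sum_sub_distrib, hQ1 y, (hcond.2 y)]
        ring
      have h1 : ∀ x : X, Q y x - condOfP P y x
          ≤ Q y x * Real.log (Q y x) - Q y x * Real.log (condOfP P y x) :=
        fun x => log_ineq_aux (hQ0 y x) (div_pos (hpos x y) (hmarg y))
      have h2 := Finset.sum_le_sum (fun x (_ : x ∈ Finset.univ) => h1 x)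
      rw [h0, Finset.sum_sub_distrib] at h2
      have := sub_nonneg.mp (by linarith [h2] :
        (0:ℝ) ≤ ∑ x, Q y x * Real.log (Q y x) - ∑ x, Q y x * Real.log (condOfP P y x))
      calc ∑ x, Q y x * Real.log (P x y / Pmarg P y)
          = ∑ x, Q y x * Real.log (condOfP P y x) := rfl
        _ ≤ ∑ x, Q y x * Real.log (Q y x) := this
    -- multiply by Pmarg and sum over y
    have hmain : ∑ y, ∑ x, Pmarg P y * Q y x * Real.log (condOfP P y x)
        ≤ ∑ y, ∑ x, Pmarg P y * Q y x * Real.log (Q y x) := by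
      apply Finset.sum_le_sum
      intro y _
      have := mul_le_mul_of_nonneg_left (key y) (hmarg y).le
      rw [Finset.mul_sum, Finset.mul_sum] at this
      simp_rw [← mul_assoc] at this
      exact this
    -- rewrite the LHS
    have hlhs : ∑ y, ∑ x, Pmarg P y * Q y x * Real.log (condOfP P y x)
        = -condEnergy P Q - ∑ y, Pmarg P y * Real.log (Pmarg P y) := by
      rw [condEnergy, neg_neg]
      have : ∀ y x, Pmarg P y * Q y x * Real.log (condOfP P y x)
          = Pmarg P y * Q y x * Real.log (P x y)
            - Pmarg P y * Real.log (Pmarg P y) * Q y x := by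
        intro y x
        rw [condOfP, Real.log_div (hpos x y).ne' (hmarg y).ne']
        ring
      simp_rw [this, Finset.sum_sub_distrib]
      congr 1
      exact Finset.sum_congr rfl fun y _ => by
        rw [← Finset.mul_sum, hQ1 y, mul_one]
    rw [condEnt, hsplit, ← hE]
    rw [hlhs] at hmain
    linarith
  refine ⟨?_, hcond, henergy, hent⟩
  -- sFun part
  have hmem : entXgY P ∈
      {h : ℝ | ∃ Q : Y → X → ℝ, IsCondPMF Q ∧ condEnergy P Q = entXY P ∧ h = condEnt P Q} :=
    ⟨condOfP P, hcond, henergy, hent.symm⟩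
  have hbdd : ∀ h ∈
      {h : ℝ | ∃ Q : Y → X → ℝ, IsCondPMF Q ∧ condEnergy P Q = entXY P ∧ h = condEnt P Q},
      h ≤ entXgY P := by
    rintro h ⟨Q, hQ, hE, rfl⟩
    exact hub Q hQ hE
  exact le_antisymm (csSup_le ⟨_, hmem⟩ hbdd) (le_csSup ⟨_, hbdd⟩ hmem)
end

section
/- The map α ↦ ε(α):=ε(Q_α) is nonincreasing on ℝ; moreover, if there exists some y with P(y)>0 for which x ↦ P(x,y) is not constant on 𝒳, then ε(α) is strictly decreasing. -/
open Real Finset Filter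

/-- Symmetrization (Chebyshev) identity. -/
lemma cheb_aux6 {X : Type*} [Fintype X] (w u L : X → ℝ) :
    ∑ x, ∑ x', w x * w x' * ((u x - u x') * (L x - L x'))
      = 2 * ((∑ x, w x) * (∑ x, w x * u x * L x) - (∑ x, w x * u x) * (∑ x, w x * L x)) := by
  have h1 : (∑ x, w x) * (∑ x, w x * u x * L x)
      = ∑ x : X, ∑ x' : X, w x * (w x' * u x' * L x') := Finset.sum_mul_sum _ _ _ _
  have h2 : (∑ x, w x * u x) * (∑ x, w x * L x)
      = ∑ x : X, ∑ x' : X, (w x * u x) * (w x' * L x') := Finset.sum_mul_sum _ _ _ _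
  have h3 : ∀ (f : X → X → ℝ), (∑ x, ∑ x', f x x') = ∑ x, ∑ x', f x' x :=
    fun f => Finset.sum_comm
  rw [h1, h2, two_mul]
  nth_rewrite 2 [h3 (fun x x' => w x * (w x' * u x' * L x'))]
  nth_rewrite 2 [h3 (fun x x' => (w x * u x) * (w x' * L x'))]
  simp only [← Finset.sum_sub_distrib, ← Finset.sum_add_distrib]
  exact Finset.sum_congr rfl fun x _ => Finset.sum_congr rfl fun x' _ => by ring

lemma sign_aux6 {a b c : ℝ} (ha : 0 < a) (hb : 0 < b) (hc : 0 < c) :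
    0 ≤ (a ^ c - b ^ c) * (Real.log a - Real.log b) := by
  rcases le_total a b with h | h
  · exact mul_nonneg_of_nonpos_of_nonpos (sub_nonpos.2 (Real.rpow_le_rpow ha.le h hc.le))
      (sub_nonpos.2 (Real.log_le_log ha h))
  · exact mul_nonneg (sub_nonneg.2 (Real.rpow_le_rpow hb.le h hc.le))
      (sub_nonneg.2 (Real.log_le_log hb h))

lemma sign_aux6' {a b c : ℝ} (ha : 0 < a) (hb : 0 < b) (hc : 0 < c) (hab : a ≠ b) :
    0 < (a ^ c - b ^ c) * (Real.log a - Real.log b) := by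
  rcases lt_or_gt_of_ne hab with h | h
  · exact mul_pos_of_neg_of_neg (sub_neg.2 (Real.rpow_lt_rpow ha.le h hc))
      (sub_neg.2 (Real.log_lt_log ha h))
  · exact mul_pos (sub_pos.2 (Real.rpow_lt_rpow hb.le h hc))
      (sub_pos.2 (Real.log_lt_log hb h))

lemma gkey_aux6 {X : Type*} [Fintype X] {α β : ℝ} (hαβ : α < β) (p : X → ℝ)
    (hp : ∀ x, 0 < p x) :
    (∑ x, p x ^ α * Real.log (p x)) * (∑ x, p x ^ β)
      ≤ (∑ x, p x ^ β * Real.log (p x)) * (∑ x, p x ^ α) := by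
  set w : X → ℝ := fun x => p x ^ α with hw
  set u : X → ℝ := fun x => p x ^ (β - α) with hu
  set L : X → ℝ := fun x => Real.log (p x) with hL
  have hwpos : ∀ x, 0 < w x := fun x => Real.rpow_pos_of_pos (hp x) α
  have hb : ∀ x, p x ^ β = w x * u x := fun x => by
    rw [hw, hu, ← Real.rpow_add (hp x)]; ring_nf
  have key : 0 ≤ ∑ x, ∑ x', w x * w x' * ((u x - u x') * (L x - L x')) :=
    Finset.sum_nonneg fun x _ => Finset.sum_nonneg fun x' _ =>
      mul_nonneg (mul_nonneg (hwpos x).le (hwpos x').le)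
        (sign_aux6 (hp x) (hp x') (by linarith))
  rw [cheb_aux6 w u L] at key
  simp only [hb]
  linarith [key]

lemma gkey_aux6' {X : Type*} [Fintype X] {α β : ℝ} (hαβ : α < β) (p : X → ℝ)
    (hp : ∀ x, 0 < p x) (hex : ∃ x x', p x ≠ p x') :
    (∑ x, p x ^ α * Real.log (p x)) * (∑ x, p x ^ β)
      < (∑ x, p x ^ β * Real.log (p x)) * (∑ x, p x ^ α) := by
  set w : X → ℝ := fun x => p x ^ α with hw
  set u : X → ℝ := fun x => p x ^ (β - α) with hu
  set L : X → ℝ := fun x => Real.log (p x) with hL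
  have hwpos : ∀ x, 0 < w x := fun x => Real.rpow_pos_of_pos (hp x) α
  have hb : ∀ x, p x ^ β = w x * u x := fun x => by
    rw [hw, hu, ← Real.rpow_add (hp x)]; ring_nf
  obtain ⟨x0, x1, hne⟩ := hex
  have key : 0 < ∑ x, ∑ x', w x * w x' * ((u x - u x') * (L x - L x')) := by
    refine Finset.sum_pos' (fun x _ => Finset.sum_nonneg fun x' _ =>
      mul_nonneg (mul_nonneg (hwpos x).le (hwpos x').le)
        (sign_aux6 (hp x) (hp x') (by linarith))) ⟨x0, Finset.mem_univ _, ?_⟩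
    refine Finset.sum_pos' (fun x' _ =>
      mul_nonneg (mul_nonneg (hwpos x0).le (hwpos x').le)
        (sign_aux6 (hp x0) (hp x') (by linarith))) ⟨x1, Finset.mem_univ _, ?_⟩
    exact mul_pos (mul_pos (hwpos x0) (hwpos x1))
      (sign_aux6' (hp x0) (hp x1) (by linarith) hne)
  rw [cheb_aux6 w u L] at key
  simp only [hb]
  linarith [key]

lemma energy_eq_aux6 {X Y : Type*} [Fintype X] [Fintype Y] (P : X → Y → ℝ) (α : ℝ) :
    condEnergy P (Qtilt P α)
      = -∑ y, Pmarg P y * ((∑ x, P x y ^ α * Real.log (P x y)) / zetaFn P α y) := by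
  unfold condEnergy Qtilt
  congr 1
  refine Finset.sum_congr rfl fun y _ => ?_
  rw [Finset.sum_div, Finset.mul_sum]
  exact Finset.sum_congr rfl fun x _ => by ring

/-- `α ↦ ε(α) := ε(Q_α)` is nonincreasing on `ℝ`; moreover, if there exists
some `y` with `P(y) > 0` for which `x ↦ P(x,y)` is not constant, then it is strictly
decreasing. -/
theorem stmt6 {X Y : Type*} [Fintype X] [Fintype Y]
    (P : X → Y → ℝ) (hpos : ∀ x y, 0 < P x y) (hsum : ∑ x, ∑ y, P x y = 1) :
    Antitone (fun α : ℝ => condEnergy P (Qtilt P α)) ∧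
    ((∃ y : Y, 0 < Pmarg P y ∧ ∃ x x' : X, P x y ≠ P x' y) →
      StrictAnti (fun α : ℝ => condEnergy P (Qtilt P α))) := by
  have hX : Nonempty X := by
    by_contra h
    rw [not_nonempty_iff] at h
    simp at hsum
  have hζ : ∀ (γ : ℝ) (y : Y), 0 < zetaFn P γ y := fun γ y =>
    Finset.sum_pos (fun x _ => Real.rpow_pos_of_pos (hpos x y) γ) Finset.univ_nonempty
  have hterm : ∀ {α β : ℝ}, α < β → ∀ y : Y,
      (∑ x, P x y ^ α * Real.log (P x y)) / zetaFn P α y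
        ≤ (∑ x, P x y ^ β * Real.log (P x y)) / zetaFn P β y := by
    intro α β hαβ y
    rw [div_le_div_iff₀ (hζ α y) (hζ β y)]
    exact gkey_aux6 hαβ (fun x => P x y) (fun x => hpos x y)
  constructor
  · intro α β hle
    rcases hle.eq_or_lt with rfl | hαβ
    · exact le_refl _
    simp only
    rw [energy_eq_aux6, energy_eq_aux6, neg_le_neg_iff]
    refine Finset.sum_le_sum fun y _ => ?_
    exact mul_le_mul_of_nonneg_left (hterm hαβ y)
      (Finset.sum_nonneg fun x _ => (hpos x y).le)
  · rintro ⟨y0, hy0, x0, x1, hne⟩ α β hαβ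
    simp only
    rw [energy_eq_aux6, energy_eq_aux6, neg_lt_neg_iff]
    refine Finset.sum_lt_sum (fun y _ => mul_le_mul_of_nonneg_left (hterm hαβ y)
      (Finset.sum_nonneg fun x _ => (hpos x y).le)) ⟨y0, Finset.mem_univ _, ?_⟩
    refine mul_lt_mul_of_pos_left ?_ hy0
    rw [div_lt_div_iff₀ (hζ α y0) (hζ β y0)]
    exact gkey_aux6' hαβ (fun x => P x y0) (fun x => hpos x y0) ⟨x0, x1, hne⟩
end

section
/- Let s:[ε_min,ε_max]→ℝ be concave, strictly increasing and differentiable, let R∈(s(ε_min), s(ε_max)], let ε_0 be the unique solution of s(ε_0)=R, set β_c=s'(ε_0), and define φ(β)=max_{ε∈[ε_min,ε_max]}[s(ε)−βε]. Then for every β≥0, sup_{ε∈[ε_min,ε_max]: s(ε)≥R}[s(ε)−R−βε] equals φ(β)−R if β≤β_c, and equals −βε_0 if β≥β_c. (This is the two-phase formula for the asymptotic free energy of the random dilution model: the paramagnetic phase for β<β_c and the glassy/frozen phase for β>β_c.) -/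
open Real Set Filter

private lemma tangent_le {εmin εmax : ℝ} {s s' : ℝ → ℝ}
    (hconc : ConcaveOn ℝ (Set.Icc εmin εmax) s)
    (hderiv : ∀ ε ∈ Set.Icc εmin εmax, HasDerivWithinAt s (s' ε) (Set.Icc εmin εmax) ε)
    {ε₀ : ℝ} (hε₀mem : ε₀ ∈ Set.Icc εmin εmax)
    {ε : ℝ} (hε : ε ∈ Set.Icc εmin εmax) :
    s ε ≤ s ε₀ + s' ε₀ * (ε - ε₀) := by
  rcases lt_trichotomy ε ε₀ with h | h | h
  · have := hconc.le_slope_of_hasDerivWithinAt hε hε₀mem h (hderiv ε₀ hε₀mem)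
    rw [slope_def_field] at this
    have hd : 0 < ε₀ - ε := by linarith
    rw [le_div_iff₀ hd] at this
    nlinarith
  · simp [h]
  · have := hconc.slope_le_of_hasDerivWithinAt hε₀mem hε h (hderiv ε₀ hε₀mem)
    rw [slope_def_field] at this
    have hd : 0 < ε - ε₀ := by linarith
    rw [div_le_iff₀ hd] at this
    linarith

/-- the two-phase formula for the asymptotic free energy of the random dilution
model.  Let `s : [ε_min, ε_max] → ℝ` be concave, strictly increasing and differentiable,
let `R ∈ (s(ε_min), s(ε_max)]`, let `ε₀` solve `s(ε₀) = R` and set `β_c = s'(ε₀)` and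
`φ(β) = max_{ε ∈ [ε_min,ε_max]} [s(ε) − β ε]`.  Then for `β ≥ 0`,
`sup_{ε : s(ε) ≥ R} [s(ε) − R − β ε]` equals `φ(β) − R` if `β ≤ β_c` (paramagnetic phase)
and equals `−β ε₀` if `β ≥ β_c` (glassy phase). -/
theorem stmt9 (εmin εmax : ℝ) (hle : εmin ≤ εmax) (s s' : ℝ → ℝ)
    (hconc : ConcaveOn ℝ (Set.Icc εmin εmax) s)
    (hmono : StrictMonoOn s (Set.Icc εmin εmax))
    (hderiv : ∀ ε ∈ Set.Icc εmin εmax, HasDerivWithinAt s (s' ε) (Set.Icc εmin εmax) ε)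
    (R : ℝ) (hR : R ∈ Set.Ioc (s εmin) (s εmax))
    (ε₀ : ℝ) (hε₀mem : ε₀ ∈ Set.Icc εmin εmax) (hε₀ : s ε₀ = R)
    (β : ℝ) (hβ : 0 ≤ β) :
    (β ≤ s' ε₀ →
      sSup {v : ℝ | ∃ ε ∈ Set.Icc εmin εmax, R ≤ s ε ∧ v = s ε - R - β * ε} =
        sSup {v : ℝ | ∃ ε ∈ Set.Icc εmin εmax, v = s ε - β * ε} - R) ∧
    (s' ε₀ ≤ β →
      sSup {v : ℝ | ∃ ε ∈ Set.Icc εmin εmax, R ≤ s ε ∧ v = s ε - R - β * ε} = -β * ε₀) := by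
  have htan : ∀ ε ∈ Set.Icc εmin εmax, s ε ≤ s ε₀ + s' ε₀ * (ε - ε₀) :=
    fun ε hε => tangent_le hconc hderiv hε₀mem hε
  -- continuity of g(ε) = s ε - β ε
  have hcont : ContinuousOn (fun ε => s ε - β * ε) (Set.Icc εmin εmax) := by
    apply ContinuousOn.sub
    · exact fun x hx => (hderiv x hx).continuousWithinAt
    · exact (continuous_const.mul continuous_id).continuousOn
  -- existence of a maximizer of g on the whole interval
  obtain ⟨εs, hεs, hmax⟩ := (isCompact_Icc (a := εmin) (b := εmax)).exists_isMaxOn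
    (Set.nonempty_Icc.mpr hle) hcont
  constructor
  · -- paramagnetic phase
    intro hβc
    -- g ε ≤ g ε₀ for ε ≤ ε₀
    have hkey : ∀ ε ∈ Set.Icc εmin εmax, ε ≤ ε₀ →
        s ε - β * ε ≤ s ε₀ - β * ε₀ := by
      intro ε hε hεle
      have h1 := htan ε hε
      nlinarith
    -- a maximizer with s ε' ≥ R
    obtain ⟨ε', hε'mem, hε'R, hε'max⟩ :
        ∃ ε' ∈ Set.Icc εmin εmax, R ≤ s ε' ∧ s ε' - β * ε' = s εs - β * εs := by
      by_cases hc : R ≤ s εs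
      · exact ⟨εs, hεs, hc, rfl⟩
      · push_neg at hc
        have hεsle : εs ≤ ε₀ := by
          by_contra hcon
          push_neg at hcon
          exact absurd (hmono hε₀mem hεs hcon) (by rw [hε₀]; linarith)
        have h1 := hkey εs hεs hεsle
        have h2 := hmax hε₀mem
        simp only [mem_upperBounds, Set.mem_image] at h2
        refine ⟨ε₀, hε₀mem, le_of_eq hε₀.symm, le_antisymm ?_ h1⟩
        exact h2
    have hG1 : IsGreatest {v : ℝ | ∃ ε ∈ Set.Icc εmin εmax, R ≤ s ε ∧ v = s ε - R - β * ε}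
        (s εs - β * εs - R) := by
      constructor
      · exact ⟨ε', hε'mem, hε'R, by rw [← hε'max]; ring⟩
      · rintro v ⟨ε, hε, _, rfl⟩
        have := hmax hε
        simp only [IsMaxOn, IsMaxFilter] at this
        have h2 : s ε - β * ε ≤ s εs - β * εs := hmax hε
        linarith
    have hG2 : IsGreatest {v : ℝ | ∃ ε ∈ Set.Icc εmin εmax, v = s ε - β * ε}
        (s εs - β * εs) := by
      constructor
      · exact ⟨εs, hεs, rfl⟩
      · rintro v ⟨ε, hε, rfl⟩
        exact hmax hε
    rw [hG1.csSup_eq, hG2.csSup_eq]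
  · -- glassy phase
    intro hβc
    have hG : IsGreatest {v : ℝ | ∃ ε ∈ Set.Icc εmin εmax, R ≤ s ε ∧ v = s ε - R - β * ε}
        (-β * ε₀) := by
      constructor
      · exact ⟨ε₀, hε₀mem, le_of_eq hε₀.symm, by rw [hε₀]; ring⟩
      · rintro v ⟨ε, hε, hRε, rfl⟩
        have hεge : ε₀ ≤ ε := by
          by_contra hcon
          push_neg at hcon
          exact absurd (hmono hε hε₀mem hcon) (by rw [hε₀]; linarith)
        have h1 := htan ε hε
        nlinarith [hε₀]
    rw [hG.csSup_eq]
end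

section
/- The paramagnetic–ferromagnetic boundary function Γ(β)=βH(X,Y)+Σ_y P(y) ln[Σ_x P(x,y)^β] satisfies Γ(1)=H(X|Y), and Γ(β) ≥ H(X|Y) for every β ≥ 0. -/
/-!
Writing `H(X|Y) = H(X,Y) + Σ_y P(y) ln P(y)` shows `Γ(1) = H(X|Y)` at once. For general `β`, the
log-sum inequality applied for each `y` to the weights `P(·,y)` and the masses `P(·,y)^β` gives
`(β - 1) Σ_x P(x,y) ln P(x,y) ≤ P(y) ln Σ_x P(x,y)^β - P(y) ln P(y)`; summing over `y` yields
`H(X|Y) ≤ Γ(β)`.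
-/

open Real Finset

/-- The paramagnetic–ferromagnetic boundary function
`Γ(β) = β H(X,Y) + Σ_y P(y) ln [Σ_x P(x,y)^β]`. -/
noncomputable def Gamma {X Y : Type*} [Fintype X] [Fintype Y] (P : X → Y → ℝ) (β : ℝ) : ℝ :=
  β * entXY P + ∑ y, Pmarg P y * Real.log (∑ x, P x y ^ β)

/-- The log-sum inequality: Jensen's inequality for `log` with weights `q i / ∑ q`. -/
theorem Real.sum_mul_log_div_le_mul_log_sum_div {ι : Type*} (s : Finset ι) {q a : ι → ℝ}
    (hq : ∀ i ∈ s, 0 < q i) (ha : ∀ i ∈ s, 0 < a i) :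
    ∑ i ∈ s, q i * log (a i / q i) ≤ (∑ i ∈ s, q i) * log ((∑ i ∈ s, a i) / ∑ i ∈ s, q i) := by
  rcases s.eq_empty_or_nonempty with rfl | hs
  · simp
  set Q := ∑ i ∈ s, q i
  have hQ : 0 < Q := sum_pos hq hs
  have jensen : ∑ i ∈ s, (q i / Q) * log (a i / q i) ≤ log (∑ i ∈ s, (q i / Q) * (a i / q i)) :=
    strictConcaveOn_log_Ioi.concaveOn.le_map_sum (fun i hi => (div_pos (hq i hi) hQ).le)
      (by rw [← sum_div, div_self hQ.ne']) (fun i hi => div_pos (ha i hi) (hq i hi))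
  have hmean : ∑ i ∈ s, (q i / Q) * (a i / q i) = (∑ i ∈ s, a i) / Q := by
    rw [sum_div]
    refine sum_congr rfl fun i hi => ?_
    field_simp [(hq i hi).ne']
  rw [hmean] at jensen
  rw [← div_le_iff₀' hQ, sum_div]
  simpa only [div_mul_eq_mul_div] using jensen

section
variable {X Y : Type*} [Fintype X] {P : X → Y → ℝ}

theorem Pmarg_pos [Nonempty X] {y : Y} (hpos : ∀ x, 0 < P x y) : 0 < Pmarg P y :=
  sum_pos (fun x _ => hpos x) univ_nonempty

variable [Fintype Y]

theorem entXgY_eq (hpos : ∀ x y, 0 < P x y) :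
    entXgY P = entXY P + ∑ y, Pmarg P y * log (Pmarg P y) := by
  have hsplit (x : X) (y : Y) :
      P x y * log (P x y / Pmarg P y) = P x y * log (P x y) - P x y * log (Pmarg P y) := by
    have : Nonempty X := ⟨x⟩
    rw [log_div (hpos x y).ne' (Pmarg_pos (hpos · y)).ne', mul_sub]
  simp only [entXgY, entXY, hsplit, sum_sub_distrib]
  rw [sum_comm (f := fun x y => P x y * log (Pmarg P y))]
  simp only [← sum_mul, Pmarg]
  ring

variable (P) in
theorem Gamma_one : Gamma P 1 = entXY P + ∑ y, Pmarg P y * log (Pmarg P y) := by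
  simp only [_root_.Gamma, Real.rpow_one, one_mul]; rfl

theorem entXgY_le_Gamma (hpos : ∀ x y, 0 < P x y) (β : ℝ) : entXgY P ≤ Gamma P β := by
  rcases isEmpty_or_nonempty X with hX | hX
  · simp [entXgY, _root_.Gamma, entXY, Pmarg]
  have fiberwise (y : Y) : (β - 1) * ∑ x, P x y * log (P x y)
      ≤ Pmarg P y * log (∑ x, P x y ^ β) - Pmarg P y * log (Pmarg P y) := by
    have hpow (x : X) : 0 < P x y ^ β := rpow_pos_of_pos (hpos x y) β
    have h : ∑ x, P x y * log (P x y ^ β / P x y)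
        ≤ Pmarg P y * log ((∑ x, P x y ^ β) / Pmarg P y) :=
      sum_mul_log_div_le_mul_log_sum_div univ (fun x _ => hpos x y) (fun x _ => hpow x)
    have hterm (x : X) : P x y * log (P x y ^ β / P x y) = (β - 1) * (P x y * log (P x y)) := by
      rw [log_div (hpow x).ne' (hpos x y).ne', log_rpow (hpos x y)]
      ring
    rw [log_div (sum_pos (fun x _ => hpow x) univ_nonempty).ne' (Pmarg_pos (hpos · y)).ne',
      mul_sub] at h
    simpa only [hterm, ← mul_sum] using h
  have := sum_le_sum fun y (_ : y ∈ univ) => fiberwise y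
  rw [entXgY_eq hpos, _root_.Gamma, entXY, sum_comm]
  simp only [← mul_sum, sum_sub_distrib] at this
  linarith
end

theorem stmt10_general {X Y : Type*} [Fintype X] [Fintype Y]
    (P : X → Y → ℝ) (hpos : ∀ x y, 0 < P x y) :
    Gamma P 1 = entXgY P ∧ ∀ β : ℝ, 0 ≤ β → entXgY P ≤ Gamma P β :=
  ⟨(Gamma_one P).trans (entXgY_eq hpos).symm, fun β _ => entXgY_le_Gamma hpos β⟩

/-- `Γ(1) = H(X|Y)` and `Γ(β) ≥ H(X|Y)` for every `β ≥ 0`. -/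
theorem stmt10 {X Y : Type*} [Fintype X] [Fintype Y]
    (P : X → Y → ℝ) (hpos : ∀ x y, 0 < P x y) (hsum : ∑ x, ∑ y, P x y = 1) :
    Gamma P 1 = entXgY P ∧ ∀ β : ℝ, 0 ≤ β → entXgY P ≤ Gamma P β :=
  stmt10_general P hpos
end

section
/- As β→∞, the error exponent E(R,β) converges to E(R,∞) = min_{Q_{XY}} { D(Q_{XY}‖P) + min{ [R−H_Q(X'|Y)]_+ : Q_{X'|Y} a conditional pmf with ε(Q_{X'Y}) ≥ ε(Q_{XY}) } }. -/
open Real Finset Filter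

/-- `Q : X → Y → ℝ` is a joint pmf on `X × Y`. -/
def IsJointPMF {X Y : Type*} [Fintype X] [Fintype Y] (Q : X → Y → ℝ) : Prop :=
  (∀ x y, 0 ≤ Q x y) ∧ ∑ x, ∑ y, Q x y = 1

/-- `ε(Q_{XY}) = Σ_{x,y} Q_{XY}(x,y) ln P(x,y)`. -/
noncomputable def epsJ {X Y : Type*} [Fintype X] [Fintype Y] (P Q : X → Y → ℝ) : ℝ :=
  ∑ x, ∑ y, Q x y * Real.log (P x y)

/-- `D(Q‖P) = Σ_{x,y} Q(x,y) ln (Q(x,y)/P(x,y))`. -/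
noncomputable def KLdiv {X Y : Type*} [Fintype X] [Fintype Y] (Q P : X → Y → ℝ) : ℝ :=
  ∑ x, ∑ y, Q x y * Real.log (Q x y / P x y)

/-- The `Y`-marginal `Q_Y(y) = Σ_x Q(x,y)` of a joint pmf `Q`. -/
noncomputable def margY {X Y : Type*} [Fintype X] (Q : X → Y → ℝ) (y : Y) : ℝ := ∑ x, Q x y

/-- `ε(Q_{X'Y}) = Σ_{x,y} Q_Y(y) Q_{X'|Y}(x|y) ln P(x,y)` for a conditional pmf `Qc`
combined with a marginal `Qy`. -/
noncomputable def epsC {X Y : Type*} [Fintype X] [Fintype Y] (P : X → Y → ℝ)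
    (Qy : Y → ℝ) (Qc : Y → X → ℝ) : ℝ :=
  ∑ y, ∑ x, Qy y * Qc y x * Real.log (P x y)

/-- `H_Q(X'|Y) = −Σ_{x,y} Q_Y(y) Q_{X'|Y}(x|y) ln Q_{X'|Y}(x|y)`. -/
noncomputable def entC {X Y : Type*} [Fintype X] [Fintype Y]
    (Qy : Y → ℝ) (Qc : Y → X → ℝ) : ℝ :=
  -∑ y, ∑ x, Qy y * Qc y x * Real.log (Qc y x)

/-- `A(Q_{XY},R,β) = min{[R − H_Q(X'|Y)]_+ :
ε(Q_{X'Y}) + (1/β)[H_Q(X'|Y) − R]_+ ≥ ε(Q_{XY})}`.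
(The constraint set is never empty, since the conditional of `Q_{XY}` itself is feasible.) -/
noncomputable def Afun {X Y : Type*} [Fintype X] [Fintype Y] (P Q : X → Y → ℝ)
    (R β : ℝ) : ℝ :=
  sInf {a : ℝ | ∃ Qc : Y → X → ℝ, IsCondPMF Qc ∧
    epsJ P Q ≤ epsC P (margY Q) Qc + (1 / β) * max (entC (margY Q) Qc - R) 0 ∧
    a = max (R - entC (margY Q) Qc) 0}

/-- The error exponent `E(R,β) = min_{Q_{XY}} [D(Q_{XY}‖P) + A(Q_{XY},R,β)]`. -/
noncomputable def Efun {X Y : Type*} [Fintype X] [Fintype Y] (P : X → Y → ℝ)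
    (R β : ℝ) : ℝ :=
  sInf {e : ℝ | ∃ Q : X → Y → ℝ, IsJointPMF Q ∧ e = KLdiv Q P + Afun P Q R β}

/-- The zero-temperature version `A(Q_{XY},R,∞) = min{[R − H_Q(X'|Y)]_+ :
ε(Q_{X'Y}) ≥ ε(Q_{XY})}`. -/
noncomputable def AfunInf {X Y : Type*} [Fintype X] [Fintype Y] (P Q : X → Y → ℝ)
    (R : ℝ) : ℝ :=
  sInf {a : ℝ | ∃ Qc : Y → X → ℝ, IsCondPMF Qc ∧
    epsJ P Q ≤ epsC P (margY Q) Qc ∧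
    a = max (R - entC (margY Q) Qc) 0}

/-- `E(R,∞) = min_{Q_{XY}} [D(Q_{XY}‖P) + A(Q_{XY},R,∞)]`. -/
noncomputable def EfunInf {X Y : Type*} [Fintype X] [Fintype Y] (P : X → Y → ℝ)
    (R : ℝ) : ℝ :=
  sInf {e : ℝ | ∃ Q : X → Y → ℝ, IsJointPMF Q ∧ e = KLdiv Q P + AfunInf P Q R}



/-!
Relaxing the constraint can only lower the minimum, so `E(R,β) ≤ E(R,∞)` for `β ≥ 0`.
Conversely, a pair `(Q_{XY}, Q_{X'|Y})` feasible at `β` violates the constraint at `∞` by at most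
`[log |𝒳| - R]_+ / β`. If some pair `(S, S_c)` has `ε(S_{XY}) < ε(S_{X'Y})`, mixing both the joint
and the conditional with `(S, S_c)` at a weight `t = O(1/β)` restores feasibility, since both `ε`'s
are linear in the mixture, while convexity of `D` and concavity of `H(X'|Y)` in the joint law raise
the objective by only `O(t)`. If there is no such pair, the constraint at `∞` holds for every pair,
and `E(R,β) = E(R,∞)`.
-/

section Entropy

variable {ι : Type*} [Fintype ι]

theorem mul_log_le_mul_log_add_sub {p q : ℝ} (hq : 0 ≤ q) (hp : 0 < p) :
    q * log p ≤ q * log q + (p - q) := by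
  rcases hq.eq_or_lt with rfl | hq
  · simpa using hp.le
  · have h := mul_le_mul_of_nonneg_left (log_le_sub_one_of_pos (div_pos hp hq)) hq.le
    rw [log_div hp.ne' hq.ne', mul_sub_one, mul_div_cancel₀ _ hq.ne'] at h
    linarith

theorem sum_mul_log_le_sum_mul_log {q p : ι → ℝ} (hq : ∀ i, 0 ≤ q i) (hq1 : ∑ i, q i = 1)
    (hp : ∀ i, 0 < p i) (hp1 : ∑ i, p i ≤ 1) :
    ∑ i, q i * log (p i) ≤ ∑ i, q i * log (q i) := by
  have h := Finset.sum_le_sum fun i (_ : i ∈ univ) => mul_log_le_mul_log_add_sub (hq i) (hp i)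
  rw [Finset.sum_add_distrib, Finset.sum_sub_distrib, hq1] at h
  linarith

theorem sum_negMulLog_nonneg {q : ι → ℝ} (hq : ∀ i, 0 ≤ q i) (hq1 : ∑ i, q i = 1) :
    0 ≤ ∑ i, negMulLog (q i) :=
  Finset.sum_nonneg fun i _ => negMulLog_nonneg (hq i) <|
    hq1 ▸ Finset.single_le_sum (fun j _ => hq j) (Finset.mem_univ i)

theorem sum_negMulLog_le_log_card [Nonempty ι] {q : ι → ℝ} (hq : ∀ i, 0 ≤ q i)
    (hq1 : ∑ i, q i = 1) : ∑ i, negMulLog (q i) ≤ log (Fintype.card ι) := by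
  have hcard : (0 : ℝ) < Fintype.card ι := by exact_mod_cast Fintype.card_pos
  have h := sum_mul_log_le_sum_mul_log hq hq1 (p := fun _ => (Fintype.card ι : ℝ)⁻¹)
    (fun _ => inv_pos.mpr hcard) (by simp [hcard.ne'])
  rw [← Finset.sum_mul, hq1, one_mul, log_inv] at h
  simp only [negMulLog, neg_mul, Finset.sum_neg_distrib]
  linarith

end Entropy

section InformationMeasures

variable {X Y : Type*} [Fintype X]

theorem margY_mix (Q S : X → Y → ℝ) (t : ℝ) :
    margY ((1 - t) • Q + t • S) = (1 - t) • margY Q + t • margY S := by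
  ext y
  simp only [margY, Pi.add_apply, Pi.smul_apply, smul_eq_mul, Finset.sum_add_distrib,
    Finset.mul_sum]

variable [Fintype Y]

theorem IsJointPMF.mix {Q S : X → Y → ℝ} (hQ : IsJointPMF Q) (hS : IsJointPMF S) {t : ℝ}
    (ht0 : 0 ≤ t) (ht1 : t ≤ 1) : IsJointPMF ((1 - t) • Q + t • S) := by
  refine ⟨fun x y => ?_, ?_⟩
  · have := hQ.1 x y; have := hS.1 x y
    simp only [Pi.add_apply, Pi.smul_apply, smul_eq_mul]
    nlinarith
  · simp only [Pi.add_apply, Pi.smul_apply, smul_eq_mul, Finset.sum_add_distrib,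
      ← Finset.mul_sum, hQ.2, hS.2]
    ring

theorem margY_nonneg {Q : X → Y → ℝ} (hQ : IsJointPMF Q) (y : Y) : 0 ≤ margY Q y :=
  Finset.sum_nonneg fun x _ => hQ.1 x y

theorem sum_margY {Q : X → Y → ℝ} (hQ : IsJointPMF Q) : ∑ y, margY Q y = 1 := by
  rw [← hQ.2, Finset.sum_comm]
  rfl

theorem epsJ_mix (P Q S : X → Y → ℝ) (t : ℝ) :
    epsJ P ((1 - t) • Q + t • S) = (1 - t) * epsJ P Q + t * epsJ P S := by
  simp only [epsJ, Pi.add_apply, Pi.smul_apply, smul_eq_mul, add_mul, mul_assoc,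
    Finset.sum_add_distrib, Finset.mul_sum]

theorem KLdiv_eq_sum_mul_log_sub_epsJ {Q P : X → Y → ℝ} (hQ : ∀ x y, 0 ≤ Q x y)
    (hP : ∀ x y, 0 < P x y) : KLdiv Q P = ∑ x, ∑ y, Q x y * log (Q x y) - epsJ P Q := by
  simp only [KLdiv, epsJ, ← Finset.sum_sub_distrib]
  refine Finset.sum_congr rfl fun x _ => Finset.sum_congr rfl fun y _ => ?_
  rcases (hQ x y).eq_or_lt with h | h
  · simp [← h]
  · rw [log_div h.ne' (hP x y).ne', mul_sub]

theorem KLdiv_nonneg {Q P : X → Y → ℝ} (hQ : IsJointPMF Q) (hP : ∀ x y, 0 < P x y)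
    (hP1 : ∑ x, ∑ y, P x y = 1) : 0 ≤ KLdiv Q P := by
  have h := sum_mul_log_le_sum_mul_log (ι := X × Y) (q := fun z => Q z.1 z.2)
    (p := fun z => P z.1 z.2) (fun z => hQ.1 z.1 z.2) (by rw [Fintype.sum_prod_type]; exact hQ.2)
    (fun z => hP z.1 z.2) (by rw [Fintype.sum_prod_type]; exact hP1.le)
  rw [Fintype.sum_prod_type, Fintype.sum_prod_type] at h
  rw [KLdiv_eq_sum_mul_log_sub_epsJ hQ.1 hP, epsJ]
  linarith

theorem KLdiv_mix_le {Q S P : X → Y → ℝ} (hQ : ∀ x y, 0 ≤ Q x y) (hS : ∀ x y, 0 ≤ S x y)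
    (hP : ∀ x y, 0 < P x y) {t : ℝ} (ht0 : 0 ≤ t) (ht1 : t ≤ 1) :
    KLdiv ((1 - t) • Q + t • S) P ≤ (1 - t) * KLdiv Q P + t * KLdiv S P := by
  have hmix : ∀ x y, 0 ≤ ((1 - t) • Q + t • S) x y := fun x y => by
    have := hQ x y; have := hS x y
    simp only [Pi.add_apply, Pi.smul_apply, smul_eq_mul]
    nlinarith
  have hconv : ∀ x y, ((1 - t) • Q + t • S) x y * log (((1 - t) • Q + t • S) x y)
      ≤ (1 - t) * (Q x y * log (Q x y)) + t * (S x y * log (S x y)) := fun x y =>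
    convexOn_mul_log.2 (Set.mem_Ici.2 (hQ x y)) (Set.mem_Ici.2 (hS x y))
      (by linarith) ht0 (by ring)
  have hsum := Finset.sum_le_sum fun x (_ : x ∈ univ) =>
    Finset.sum_le_sum fun y (_ : y ∈ univ) => hconv x y
  simp only [Finset.sum_add_distrib, ← Finset.mul_sum] at hsum
  rw [KLdiv_eq_sum_mul_log_sub_epsJ hmix hP, KLdiv_eq_sum_mul_log_sub_epsJ hQ hP,
    KLdiv_eq_sum_mul_log_sub_epsJ hS hP, epsJ_mix]
  linarith

theorem entC_eq_sum_sum_mul_negMulLog (Qy : Y → ℝ) (Qc : Y → X → ℝ) :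
    entC Qy Qc = ∑ y, ∑ x, Qy y * negMulLog (Qc y x) := by
  simp only [entC, negMulLog, ← Finset.sum_neg_distrib]
  congr! 2
  ring

theorem entC_nonneg {Qy : Y → ℝ} {Qc : Y → X → ℝ} (hQy : ∀ y, 0 ≤ Qy y)
    (hQc : IsCondPMF Qc) : 0 ≤ entC Qy Qc := by
  rw [entC_eq_sum_sum_mul_negMulLog]
  simp only [← Finset.mul_sum]
  exact Finset.sum_nonneg fun y _ =>
    mul_nonneg (hQy y) (sum_negMulLog_nonneg (hQc.1 y) (hQc.2 y))

theorem entC_le_log_card [Nonempty X] {Qy : Y → ℝ} {Qc : Y → X → ℝ} (hQy : ∀ y, 0 ≤ Qy y)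
    (hQy1 : ∑ y, Qy y = 1) (hQc : IsCondPMF Qc) : entC Qy Qc ≤ log (Fintype.card X) := by
  rw [entC_eq_sum_sum_mul_negMulLog]
  simp only [← Finset.mul_sum]
  calc ∑ y, Qy y * ∑ x, negMulLog (Qc y x) ≤ ∑ y, Qy y * log (Fintype.card X) :=
        Finset.sum_le_sum fun y _ =>
          mul_le_mul_of_nonneg_left (sum_negMulLog_le_log_card (hQc.1 y) (hQc.2 y)) (hQy y)
    _ = log (Fintype.card X) := by rw [← Finset.sum_mul, hQy1, one_mul]

end InformationMeasures

section ConditionalMixture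

variable {X Y : Type*}

theorem mul_negMulLog_add_mul_negMulLog_le {a b u v : ℝ} (ha : 0 ≤ a) (hb : 0 ≤ b)
    (hab : 0 < a + b) (hu : 0 ≤ u) (hv : 0 ≤ v) :
    a * negMulLog u + b * negMulLog v ≤ (a + b) * negMulLog ((a * u + b * v) / (a + b)) := by
  have h := concaveOn_negMulLog.2 (Set.mem_Ici.2 hu) (Set.mem_Ici.2 hv)
    (div_nonneg ha hab.le) (div_nonneg hb hab.le) (by field_simp)
  simp only [smul_eq_mul] at h
  rw [show a / (a + b) * u + b / (a + b) * v = (a * u + b * v) / (a + b) by field_simp] at h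
  calc a * negMulLog u + b * negMulLog v
      = (a + b) * (a / (a + b) * negMulLog u + b / (a + b) * negMulLog v) := by field_simp
    _ ≤ _ := mul_le_mul_of_nonneg_left h hab.le

/-- The conditional pmf given `Y` of the mixture `(1 - t) Qy Qc + t Sy Sc`; on rows of zero
mass it is `Qc`, an arbitrary choice. -/
noncomputable def condMix (t : ℝ) (Qy : Y → ℝ) (Qc : Y → X → ℝ) (Sy : Y → ℝ)
    (Sc : Y → X → ℝ) : Y → X → ℝ :=
  fun y x => if (1 - t) * Qy y + t * Sy y = 0 then Qc y x
    else ((1 - t) * Qy y * Qc y x + t * Sy y * Sc y x) / ((1 - t) * Qy y + t * Sy y)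

variable {t : ℝ} {Qy Sy : Y → ℝ} {Qc Sc : Y → X → ℝ}

theorem mul_condMix (hQy : ∀ y, 0 ≤ Qy y) (hSy : ∀ y, 0 ≤ Sy y) (ht0 : 0 ≤ t) (ht1 : t ≤ 1)
    (y : Y) (x : X) :
    ((1 - t) * Qy y + t * Sy y) * condMix t Qy Qc Sy Sc y x
      = (1 - t) * Qy y * Qc y x + t * Sy y * Sc y x := by
  have ha : 0 ≤ (1 - t) * Qy y := mul_nonneg (by linarith) (hQy y)
  have hb : 0 ≤ t * Sy y := mul_nonneg ht0 (hSy y)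
  by_cases h : (1 - t) * Qy y + t * Sy y = 0
  · have ha0 : (1 - t) * Qy y = 0 := by linarith
    have hb0 : t * Sy y = 0 := by linarith
    simp [ha0, hb0]
  · simp only [condMix, if_neg h]
    field_simp

variable [Fintype X]

theorem isCondPMF_condMix (hQy : ∀ y, 0 ≤ Qy y) (hSy : ∀ y, 0 ≤ Sy y) (ht0 : 0 ≤ t)
    (ht1 : t ≤ 1) (hQc : IsCondPMF Qc) (hSc : IsCondPMF Sc) :
    IsCondPMF (condMix t Qy Qc Sy Sc) := by
  have ha : ∀ y, 0 ≤ (1 - t) * Qy y := fun y => mul_nonneg (by linarith) (hQy y)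
  have hb : ∀ y, 0 ≤ t * Sy y := fun y => mul_nonneg ht0 (hSy y)
  refine ⟨fun y x => ?_, fun y => ?_⟩ <;> by_cases h : (1 - t) * Qy y + t * Sy y = 0 <;>
    simp only [condMix, h, if_true, if_false]
  · exact hQc.1 y x
  · exact div_nonneg (add_nonneg (mul_nonneg (ha y) (hQc.1 y x))
      (mul_nonneg (hb y) (hSc.1 y x))) (add_nonneg (ha y) (hb y))
  · exact hQc.2 y
  · rw [← Finset.sum_div, Finset.sum_add_distrib, ← Finset.mul_sum, ← Finset.mul_sum,
      hQc.2, hSc.2, mul_one, mul_one, div_self h]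

variable [Fintype Y]

theorem epsC_condMix (P : X → Y → ℝ) (hQy : ∀ y, 0 ≤ Qy y) (hSy : ∀ y, 0 ≤ Sy y)
    (ht0 : 0 ≤ t) (ht1 : t ≤ 1) :
    epsC P ((1 - t) • Qy + t • Sy) (condMix t Qy Qc Sy Sc)
      = (1 - t) * epsC P Qy Qc + t * epsC P Sy Sc := by
  simp only [epsC, Pi.add_apply, Pi.smul_apply, smul_eq_mul, mul_condMix hQy hSy ht0 ht1,
    add_mul, Finset.sum_add_distrib, Finset.mul_sum, mul_assoc]

theorem entC_condMix_ge (hQy : ∀ y, 0 ≤ Qy y) (hSy : ∀ y, 0 ≤ Sy y) (ht0 : 0 ≤ t)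
    (ht1 : t ≤ 1) (hQc : IsCondPMF Qc) (hSc : IsCondPMF Sc) :
    (1 - t) * entC Qy Qc + t * entC Sy Sc
      ≤ entC ((1 - t) • Qy + t • Sy) (condMix t Qy Qc Sy Sc) := by
  simp only [entC_eq_sum_sum_mul_negMulLog, Finset.mul_sum, ← Finset.sum_add_distrib,
    Pi.add_apply, Pi.smul_apply, smul_eq_mul]
  refine Finset.sum_le_sum fun y _ => Finset.sum_le_sum fun x _ => ?_
  have ha : 0 ≤ (1 - t) * Qy y := mul_nonneg (by linarith) (hQy y)
  have hb : 0 ≤ t * Sy y := mul_nonneg ht0 (hSy y)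
  by_cases h : (1 - t) * Qy y + t * Sy y = 0
  · have ha0 : (1 - t) * Qy y = 0 := by linarith
    have hb0 : t * Sy y = 0 := by linarith
    simp [← mul_assoc, ha0, hb0]
  · simpa only [condMix, if_neg h, mul_assoc] using mul_negMulLog_add_mul_negMulLog_le ha hb
      ((add_nonneg ha hb).lt_of_ne' h) (hQc.1 y x) (hSc.1 y x)

end ConditionalMixture

section ErrorExponents

variable {X Y : Type*} [Fintype X] [Fintype Y]

theorem exists_isCondPMF_epsC_eq [Nonempty X] (P : X → Y → ℝ) {Q : X → Y → ℝ}
    (hQ : IsJointPMF Q) : ∃ Qc : Y → X → ℝ, IsCondPMF Qc ∧ epsC P (margY Q) Qc = epsJ P Q := by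
  classical
  refine ⟨fun y x => if margY Q y = 0 then (Fintype.card X : ℝ)⁻¹ else Q x y / margY Q y,
    ⟨fun y x => ?_, fun y => ?_⟩, ?_⟩
  · dsimp only
    split_ifs
    · positivity
    · exact div_nonneg (hQ.1 x y) (margY_nonneg hQ y)
  · dsimp only
    split_ifs with h
    · simp
    · rw [← Finset.sum_div]
      exact div_self h
  · rw [epsC, epsJ, Finset.sum_comm]
    refine Finset.sum_congr rfl fun x _ => Finset.sum_congr rfl fun y _ => ?_
    split_ifs with h
    · have hQxy : Q x y = 0 := le_antisymm
        (h ▸ Finset.single_le_sum (fun x' _ => hQ.1 x' y) (Finset.mem_univ x)) (hQ.1 x y)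
      simp [h, hQxy]
    · field_simp

theorem AfunInf_le {P Q : X → Y → ℝ} {Qc : Y → X → ℝ} (R : ℝ) (hQc : IsCondPMF Qc)
    (hfeas : epsJ P Q ≤ epsC P (margY Q) Qc) :
    AfunInf P Q R ≤ max (R - entC (margY Q) Qc) 0 :=
  csInf_le ⟨0, by rintro _ ⟨_, _, _, rfl⟩; exact le_max_right _ _⟩ ⟨Qc, hQc, hfeas, rfl⟩

theorem le_epsC_add_of_le {P Q : X → Y → ℝ} {Qc : Y → X → ℝ} (R : ℝ) {β : ℝ} (hβ : 0 ≤ β)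
    (hfeas : epsJ P Q ≤ epsC P (margY Q) Qc) :
    epsJ P Q ≤ epsC P (margY Q) Qc + (1 / β) * max (entC (margY Q) Qc - R) 0 :=
  le_add_of_le_of_nonneg hfeas (mul_nonneg (by positivity) (le_max_right _ _))

theorem Afun_le {P Q : X → Y → ℝ} {Qc : Y → X → ℝ} {R β : ℝ} (hQc : IsCondPMF Qc)
    (hfeas : epsJ P Q ≤ epsC P (margY Q) Qc + (1 / β) * max (entC (margY Q) Qc - R) 0) :
    Afun P Q R β ≤ max (R - entC (margY Q) Qc) 0 :=
  csInf_le ⟨0, by rintro _ ⟨_, _, _, rfl⟩; exact le_max_right _ _⟩ ⟨Qc, hQc, hfeas, rfl⟩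

theorem exists_lt_Afun_add [Nonempty X] (P : X → Y → ℝ) {Q : X → Y → ℝ} (hQ : IsJointPMF Q)
    (R : ℝ) {β : ℝ} (hβ : 0 ≤ β) {ε : ℝ} (hε : 0 < ε) :
    ∃ Qc : Y → X → ℝ, IsCondPMF Qc ∧
      epsJ P Q ≤ epsC P (margY Q) Qc + (1 / β) * max (entC (margY Q) Qc - R) 0 ∧
      max (R - entC (margY Q) Qc) 0 < Afun P Q R β + ε := by
  obtain ⟨Qc, hQc, heq⟩ := exists_isCondPMF_epsC_eq P hQ
  by_contra! h
  have : Afun P Q R β + ε ≤ Afun P Q R β :=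
    le_csInf ⟨_, Qc, hQc, le_epsC_add_of_le R hβ heq.ge, rfl⟩
      (by rintro _ ⟨Qc', hQc', hfeas', rfl⟩; exact h Qc' hQc' hfeas')
  linarith

theorem Afun_le_AfunInf [Nonempty X] (P : X → Y → ℝ) {Q : X → Y → ℝ} (hQ : IsJointPMF Q)
    (R : ℝ) {β : ℝ} (hβ : 0 ≤ β) : Afun P Q R β ≤ AfunInf P Q R := by
  obtain ⟨Qc, hQc, heq⟩ := exists_isCondPMF_epsC_eq P hQ
  refine le_csInf ⟨_, Qc, hQc, heq.ge, rfl⟩ ?_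
  rintro _ ⟨Qc', hQc', hfeas', rfl⟩
  exact Afun_le hQc' (le_epsC_add_of_le R hβ hfeas')

theorem bddBelow_KLdiv_add {P : X → Y → ℝ} (hP : ∀ x y, 0 < P x y)
    (hP1 : ∑ x, ∑ y, P x y = 1) {f : (X → Y → ℝ) → ℝ} (hf : ∀ Q, 0 ≤ f Q) :
    BddBelow {e : ℝ | ∃ Q : X → Y → ℝ, IsJointPMF Q ∧ e = KLdiv Q P + f Q} := by
  refine ⟨0, ?_⟩
  rintro _ ⟨Q, hQ, rfl⟩
  exact add_nonneg (KLdiv_nonneg hQ hP hP1) (hf Q)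

theorem Efun_le {P : X → Y → ℝ} (hP : ∀ x y, 0 < P x y) (hP1 : ∑ x, ∑ y, P x y = 1)
    {Q : X → Y → ℝ} (hQ : IsJointPMF Q) (R β : ℝ) : Efun P R β ≤ KLdiv Q P + Afun P Q R β :=
  csInf_le (bddBelow_KLdiv_add hP hP1 fun Q => Real.sInf_nonneg
    (by rintro _ ⟨_, _, _, rfl⟩; exact le_max_right _ _)) ⟨Q, hQ, rfl⟩

theorem EfunInf_le {P : X → Y → ℝ} (hP : ∀ x y, 0 < P x y) (hP1 : ∑ x, ∑ y, P x y = 1)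
    {Q : X → Y → ℝ} (hQ : IsJointPMF Q) (R : ℝ) : EfunInf P R ≤ KLdiv Q P + AfunInf P Q R :=
  csInf_le (bddBelow_KLdiv_add hP hP1 fun Q => Real.sInf_nonneg
    (by rintro _ ⟨_, _, _, rfl⟩; exact le_max_right _ _)) ⟨Q, hQ, rfl⟩

theorem Efun_le_EfunInf [Nonempty X] {P : X → Y → ℝ} (hP : ∀ x y, 0 < P x y)
    (hP1 : ∑ x, ∑ y, P x y = 1) (R : ℝ) {β : ℝ} (hβ : 0 ≤ β) : Efun P R β ≤ EfunInf P R := by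
  refine le_csInf ⟨_, P, ⟨fun x y => (hP x y).le, hP1⟩, rfl⟩ ?_
  rintro _ ⟨Q, hQ, rfl⟩
  calc Efun P R β ≤ KLdiv Q P + Afun P Q R β := Efun_le hP hP1 hQ R β
    _ ≤ KLdiv Q P + AfunInf P Q R := by gcongr; exact Afun_le_AfunInf P hQ R hβ

theorem EfunInf_le_Efun_add [Nonempty X] {P : X → Y → ℝ} (hP : ∀ x y, 0 < P x y)
    (hP1 : ∑ x, ∑ y, P x y = 1) (R : ℝ) {β c : ℝ} (hβ : 0 ≤ β)
    (htransfer : ∀ (Q : X → Y → ℝ) (Qc : Y → X → ℝ), IsJointPMF Q → IsCondPMF Qc →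
      epsJ P Q ≤ epsC P (margY Q) Qc + (1 / β) * max (entC (margY Q) Qc - R) 0 →
      ∃ (Q' : X → Y → ℝ) (Qc' : Y → X → ℝ), IsJointPMF Q' ∧ IsCondPMF Qc' ∧
        epsJ P Q' ≤ epsC P (margY Q') Qc' ∧
        KLdiv Q' P + max (R - entC (margY Q') Qc') 0
          ≤ KLdiv Q P + max (R - entC (margY Q) Qc) 0 + c) :
    EfunInf P R ≤ Efun P R β + c := by
  rw [← sub_le_iff_le_add]
  refine le_csInf ⟨_, P, ⟨fun x y => (hP x y).le, hP1⟩, rfl⟩ ?_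
  rintro _ ⟨Q, hQ, rfl⟩
  refine sub_le_iff_le_add.2 (le_of_forall_pos_le_add fun ε hε => ?_)
  obtain ⟨Qc, hQc, hfeas, hlt⟩ := exists_lt_Afun_add P hQ R hβ hε
  obtain ⟨Q', Qc', hQ', hQc', hfeas', hle⟩ := htransfer Q Qc hQ hQc hfeas
  calc EfunInf P R ≤ KLdiv Q' P + AfunInf P Q' R := EfunInf_le hP hP1 hQ' R
    _ ≤ KLdiv Q' P + max (R - entC (margY Q') Qc') 0 := by
        gcongr; exact AfunInf_le R hQc' hfeas'
    _ ≤ KLdiv Q P + Afun P Q R β + c + ε := by linarith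

end ErrorExponents

section Limit

variable {X Y : Type*} [Fintype X] [Fintype Y]

/-- Apply the hypothesis to the joint law `Q_Y Qc` paired with the conditional of `Q`. -/
theorem epsJ_le_epsC_of_forall_le [Nonempty X] {P : X → Y → ℝ}
    (h : ∀ (S : X → Y → ℝ) (Sc : Y → X → ℝ), IsJointPMF S → IsCondPMF Sc →
      epsC P (margY S) Sc ≤ epsJ P S)
    {Q : X → Y → ℝ} {Qc : Y → X → ℝ} (hQ : IsJointPMF Q) (hQc : IsCondPMF Qc) :
    epsJ P Q ≤ epsC P (margY Q) Qc := by
  set S : X → Y → ℝ := fun x y => margY Q y * Qc y x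
  have hSY : margY S = margY Q := by
    ext y
    simp only [S, margY, ← Finset.mul_sum, hQc.2 y, mul_one]
  have hS : IsJointPMF S := by
    refine ⟨fun x y => mul_nonneg (margY_nonneg hQ y) (hQc.1 y x), ?_⟩
    rw [Finset.sum_comm]
    change ∑ y, margY S y = 1
    rw [hSY, sum_margY hQ]
  have hεS : epsJ P S = epsC P (margY Q) Qc := by
    simp only [epsJ, epsC, S]
    exact Finset.sum_comm
  obtain ⟨Sc, hSc, hεSc⟩ := exists_isCondPMF_epsC_eq P hQ
  have := h S Sc hS hSc
  rwa [hSY, hεSc, hεS] at this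

theorem exists_feasible_mix [Nonempty X] {P : X → Y → ℝ} (hP : ∀ x y, 0 < P x y)
    (hP1 : ∑ x, ∑ y, P x y = 1) (R : ℝ) {S : X → Y → ℝ} {Sc : Y → X → ℝ}
    (hS : IsJointPMF S) (hSc : IsCondPMF Sc) {t δ : ℝ} (ht0 : 0 ≤ t) (ht1 : t ≤ 1)
    (hgap : (1 - t) * δ ≤ t * (epsC P (margY S) Sc - epsJ P S))
    {Q : X → Y → ℝ} {Qc : Y → X → ℝ} (hQ : IsJointPMF Q) (hQc : IsCondPMF Qc)
    (hfeas : epsJ P Q ≤ epsC P (margY Q) Qc + δ) :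
    ∃ (Q' : X → Y → ℝ) (Qc' : Y → X → ℝ), IsJointPMF Q' ∧ IsCondPMF Qc' ∧
      epsJ P Q' ≤ epsC P (margY Q') Qc' ∧
      KLdiv Q' P + max (R - entC (margY Q') Qc') 0
        ≤ KLdiv Q P + max (R - entC (margY Q) Qc) 0 + t * (log (Fintype.card X) + KLdiv S P) := by
  have hQY := margY_nonneg hQ
  have hSY := margY_nonneg hS
  refine ⟨(1 - t) • Q + t • S, condMix t (margY Q) Qc (margY S) Sc, hQ.mix hS ht0 ht1,
    isCondPMF_condMix hQY hSY ht0 ht1 hQc hSc, ?_, ?_⟩ <;> rw [margY_mix]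
  · rw [epsJ_mix, epsC_condMix P hQY hSY ht0 ht1]
    linarith [mul_le_mul_of_nonneg_left hfeas (sub_nonneg.2 ht1)]
  · have hH := entC_condMix_ge hQY hSY ht0 ht1 hQc hSc
    have htH : t * entC (margY Q) Qc ≤ t * log (Fintype.card X) :=
      mul_le_mul_of_nonneg_left (entC_le_log_card hQY (sum_margY hQ) hQc) ht0
    have htH0 : 0 ≤ t * entC (margY Q) Qc := mul_nonneg ht0 (entC_nonneg hQY hQc)
    have htHS : 0 ≤ t * entC (margY S) Sc := mul_nonneg ht0 (entC_nonneg hSY hSc)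
    have htKL : 0 ≤ t * KLdiv Q P := mul_nonneg ht0 (KLdiv_nonneg hQ hP hP1)
    have hKL := KLdiv_mix_le hQ.1 hS.1 hP ht0 ht1
    have hmax := le_max_left (R - entC (margY Q) Qc) 0
    have hmax0 := le_max_right (R - entC (margY Q) Qc) 0
    set H' := entC ((1 - t) • margY Q + t • margY S) (condMix t (margY Q) Qc (margY S) Sc)
    have : max (R - H') 0 ≤ max (R - entC (margY Q) Qc) 0 + t * log (Fintype.card X) :=
      max_le (by linarith) (by linarith)
    linarith

theorem EfunInf_le_Efun_add_mul [Nonempty X] {P : X → Y → ℝ} (hP : ∀ x y, 0 < P x y)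
    (hP1 : ∑ x, ∑ y, P x y = 1) (R : ℝ) {S : X → Y → ℝ} {Sc : Y → X → ℝ}
    (hS : IsJointPMF S) (hSc : IsCondPMF Sc) {β t : ℝ} (hβ : 0 < β) (ht0 : 0 ≤ t) (ht1 : t ≤ 1)
    (ht : (1 - t) * (max (log (Fintype.card X) - R) 0 / β)
      ≤ t * (epsC P (margY S) Sc - epsJ P S)) :
    EfunInf P R ≤ Efun P R β + t * (log (Fintype.card X) + KLdiv S P) := by
  refine EfunInf_le_Efun_add hP hP1 R hβ.le fun Q Qc hQ hQc hfeas =>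
    exists_feasible_mix hP hP1 R hS hSc ht0 ht1 ht hQ hQc (hfeas.trans ?_)
  rw [one_div_mul_eq_div]
  gcongr
  exact entC_le_log_card (margY_nonneg hQ) (sum_margY hQ) hQc

theorem Efun_eq_EfunInf_of_forall_le [Nonempty X] {P : X → Y → ℝ} (hP : ∀ x y, 0 < P x y)
    (hP1 : ∑ x, ∑ y, P x y = 1)
    (h : ∀ (S : X → Y → ℝ) (Sc : Y → X → ℝ), IsJointPMF S → IsCondPMF Sc →
      epsC P (margY S) Sc ≤ epsJ P S)
    (R : ℝ) {β : ℝ} (hβ : 0 ≤ β) : Efun P R β = EfunInf P R := by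
  refine le_antisymm (Efun_le_EfunInf hP hP1 R hβ) ?_
  simpa using EfunInf_le_Efun_add hP hP1 R hβ (c := 0) fun Q Qc hQ hQc _ =>
    ⟨Q, Qc, hQ, hQc, epsJ_le_epsC_of_forall_le h hQ hQc, by simp⟩

end Limit

/-- as `β → ∞`, the error exponent `E(R,β)` converges to `E(R,∞)`. -/
theorem stmt12 {X Y : Type*} [Fintype X] [Fintype Y]
    (P : X → Y → ℝ) (hpos : ∀ x y, 0 < P x y) (hsum : ∑ x, ∑ y, P x y = 1) (R : ℝ) :
    Tendsto (fun β : ℝ => Efun P R β) atTop (nhds (EfunInf P R)) := by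
  have : Nonempty X :=
    let ⟨x, _⟩ := Finset.exists_ne_zero_of_sum_ne_zero (hsum ▸ one_ne_zero); ⟨x⟩
  have hupper : ∀ᶠ β in atTop, Efun P R β ≤ EfunInf P R :=
    (eventually_ge_atTop 0).mono fun β hβ => Efun_le_EfunInf hpos hsum R hβ
  by_cases hgap : ∃ (S : X → Y → ℝ) (Sc : Y → X → ℝ),
      IsJointPMF S ∧ IsCondPMF Sc ∧ epsJ P S < epsC P (margY S) Sc
  · obtain ⟨S, Sc, hS, hSc, hlt⟩ := hgap
    set C := max (log (Fintype.card X) - R) 0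
    set G := epsC P (margY S) Sc - epsJ P S
    have hG : 0 < G := sub_pos.2 hlt
    -- the weight `C / (C + G β)` is the one with `(1 - t) C / β = t G`
    have ht : Tendsto (fun β => C / (C + G * β)) atTop (nhds 0) :=
      tendsto_const_nhds.div_atTop
        (tendsto_atTop_add_const_left _ _ (tendsto_id.const_mul_atTop hG))
    have hlower : ∀ᶠ β in atTop,
        EfunInf P R - C / (C + G * β) * (log (Fintype.card X) + KLdiv S P) ≤ Efun P R β := by
      filter_upwards [eventually_gt_atTop 0] with β hβ
      have hCG : 0 < C + G * β := by positivity
      refine sub_le_iff_le_add.2 (EfunInf_le_Efun_add_mul hpos hsum R hS hSc hβ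
        (by positivity) (div_le_one_of_le₀ (by linarith [mul_pos hG hβ]) hCG.le) (le_of_eq ?_))
      field_simp
      ring
    refine tendsto_of_tendsto_of_tendsto_of_le_of_le' ?_ tendsto_const_nhds hlower hupper
    simpa using tendsto_const_nhds.sub (ht.mul_const (log (Fintype.card X) + KLdiv S P))
  · push Not at hgap
    exact tendsto_const_nhds.congr' ((eventually_ge_atTop 0).mono fun β hβ =>
      (Efun_eq_EfunInf_of_forall_le hpos hsum hgap R hβ).symm)
end

section
/- Binomial upper-tail exponent: let Ω_N be a binomial random variable with M_N trials and success probability p_N, where (1/N) ln M_N → h ≥ 0 and (1/N) ln p_N → −R with R>0, and let b∈ℝ. If b < [h−R]_+ then (1/N) ln Pr{Ω_N ≥ e^{Nb}} → −[R−h]_+ as N→∞, whereas if b > [h−R]_+ then (1/N) ln Pr{Ω_N ≥ e^{Nb}} → −∞ (super-exponential decay). -/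
open Real Finset Filter

/-- `Pr{Ω ≥ t}` for `Ω` binomial with `M` trials and success probability `p`. -/
noncomputable def binomUpperTail (M : ℕ) (p : ℝ) (t : ℝ) : ℝ :=
  ∑ k ∈ Finset.range (M + 1),
    if t ≤ (k : ℝ) then (M.choose k : ℝ) * p ^ k * (1 - p) ^ (M - k) else 0


set_option maxHeartbeats 1000000

lemma binom_sum (M : ℕ) (x y : ℝ) :
    ∑ k ∈ Finset.range (M+1), (M.choose k : ℝ) * x ^ k * y ^ (M - k) = (x + y)^M := by
  rw [add_pow]
  exact Finset.sum_congr rfl fun k _ => by ring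

lemma term_nonneg {M : ℕ} {p : ℝ} (hp0 : 0 ≤ p) (hp1 : p ≤ 1) (k : ℕ) :
    0 ≤ (M.choose k : ℝ) * p ^ k * (1 - p) ^ (M - k) := by
  have : (0:ℝ) ≤ 1 - p := by linarith
  positivity

lemma tail_le_chernoff {M : ℕ} {p : ℝ} (hp0 : 0 ≤ p) (hp1 : p ≤ 1) (s t : ℝ) (hs : 0 ≤ s) :
    binomUpperTail M p t ≤ Real.exp (-(s*t)) * (p * Real.exp s + (1-p))^M := by
  have key : ∀ k ∈ Finset.range (M+1),
      (if t ≤ (k:ℝ) then (M.choose k : ℝ) * p ^ k * (1 - p) ^ (M - k) else 0)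
        ≤ Real.exp (-(s*t)) * ((M.choose k : ℝ) * (p * Real.exp s) ^ k * (1 - p) ^ (M - k)) := by
    intro k _
    have hterm := term_nonneg (M := M) hp0 hp1 k
    have e1 : (p * Real.exp s) ^ k = p ^ k * Real.exp (s * k) := by
      rw [mul_pow, ← Real.exp_nat_mul, mul_comm (k:ℝ) s]
    have hrw : Real.exp (-(s*t)) * ((M.choose k : ℝ) * (p * Real.exp s) ^ k * (1 - p) ^ (M - k))
        = Real.exp (s*k - s*t) * ((M.choose k : ℝ) * p ^ k * (1 - p) ^ (M - k)) := by
      rw [e1, show s*(k:ℝ) - s*t = s*(k:ℝ) + (-(s*t)) by ring, Real.exp_add]; ring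
    rw [hrw]
    split
    · rename_i hk
      refine le_mul_of_one_le_left hterm (Real.one_le_exp ?_)
      nlinarith
    · exact mul_nonneg (Real.exp_pos _).le hterm
  calc binomUpperTail M p t
      ≤ ∑ k ∈ Finset.range (M+1),
          Real.exp (-(s*t)) * ((M.choose k : ℝ) * (p * Real.exp s) ^ k * (1 - p) ^ (M - k)) :=
        Finset.sum_le_sum key
    _ = Real.exp (-(s*t)) * ∑ k ∈ Finset.range (M+1),
          (M.choose k : ℝ) * (p * Real.exp s) ^ k * (1 - p) ^ (M - k) := by
        rw [← Finset.mul_sum]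
    _ = _ := by rw [binom_sum]

lemma low_le_chernoff {M : ℕ} {p : ℝ} (hp0 : 0 ≤ p) (hp1 : p ≤ 1) (s t : ℝ) (hs : 0 ≤ s) :
    (∑ k ∈ Finset.range (M+1),
        if t ≤ (k : ℝ) then 0 else (M.choose k : ℝ) * p ^ k * (1 - p) ^ (M - k))
      ≤ Real.exp (s*t) * (p * Real.exp (-s) + (1-p))^M := by
  have key : ∀ k ∈ Finset.range (M+1),
      (if t ≤ (k:ℝ) then 0 else (M.choose k : ℝ) * p ^ k * (1 - p) ^ (M - k))
        ≤ Real.exp (s*t) * ((M.choose k : ℝ) * (p * Real.exp (-s)) ^ k * (1 - p) ^ (M - k)) := by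
    intro k _
    have hterm := term_nonneg (M := M) hp0 hp1 k
    have e1 : (p * Real.exp (-s)) ^ k = p ^ k * Real.exp (-(s * k)) := by
      rw [mul_pow, ← Real.exp_nat_mul, mul_comm (k:ℝ) (-s)]; ring_nf
    have hrw : Real.exp (s*t) * ((M.choose k : ℝ) * (p * Real.exp (-s)) ^ k * (1 - p) ^ (M - k))
        = Real.exp (s*t - s*k) * ((M.choose k : ℝ) * p ^ k * (1 - p) ^ (M - k)) := by
      rw [e1, show s*t - s*(k:ℝ) = s*t + (-(s*(k:ℝ))) by ring, Real.exp_add]; ring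
    rw [hrw]
    split
    · exact mul_nonneg (Real.exp_pos _).le hterm
    · rename_i hk
      push_neg at hk
      refine le_mul_of_one_le_left hterm (Real.one_le_exp ?_)
      nlinarith
  calc (∑ k ∈ Finset.range (M+1),
        if t ≤ (k : ℝ) then 0 else (M.choose k : ℝ) * p ^ k * (1 - p) ^ (M - k))
      ≤ ∑ k ∈ Finset.range (M+1),
          Real.exp (s*t) * ((M.choose k : ℝ) * (p * Real.exp (-s)) ^ k * (1 - p) ^ (M - k)) :=
        Finset.sum_le_sum key
    _ = Real.exp (s*t) * ∑ k ∈ Finset.range (M+1),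
          (M.choose k : ℝ) * (p * Real.exp (-s)) ^ k * (1 - p) ^ (M - k) := by
        rw [← Finset.mul_sum]
    _ = _ := by rw [binom_sum]

lemma chernoff_base_pow {p E : ℝ} (hp0 : 0 ≤ p) (hp1 : p ≤ 1) (hE : 0 ≤ E) (M : ℕ) :
    (p * E + (1-p))^M ≤ Real.exp ((M:ℝ) * (p * (E - 1))) := by
  have h1 : p * E + (1-p) ≤ Real.exp (p*(E-1)) := by
    have := Real.add_one_le_exp (p*(E-1)); nlinarith
  have h0 : 0 ≤ p * E + (1-p) := add_nonneg (mul_nonneg hp0 hE) (by linarith)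
  calc (p*E+(1-p))^M ≤ (Real.exp (p*(E-1)))^M := pow_le_pow_left₀ h0 h1 M
    _ = Real.exp ((M:ℝ)*(p*(E-1))) := (Real.exp_nat_mul _ M).symm

lemma tail_eq_one_sub {M : ℕ} {p t : ℝ} (ht0 : 0 < t) (ht1 : t ≤ 1) :
    binomUpperTail M p t = 1 - (1-p)^M := by
  have key : ∀ k ∈ Finset.range (M+1),
      (if t ≤ (k:ℝ) then (M.choose k : ℝ) * p ^ k * (1 - p) ^ (M - k) else 0)
        = (M.choose k : ℝ) * p ^ k * (1 - p) ^ (M - k)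
            - (if k = 0 then (1-p)^M else 0) := by
    intro k _
    rcases Nat.eq_zero_or_pos k with hk | hk
    · subst hk; simp [not_le.2 ht0]
    · have hk' : t ≤ (k:ℝ) := le_trans ht1 (by exact_mod_cast hk)
      simp [hk', hk.ne']
  rw [binomUpperTail, Finset.sum_congr rfl key, Finset.sum_sub_distrib, binom_sum]
  have : ∑ k ∈ Finset.range (M+1), (if k = 0 then (1-p:ℝ)^M else 0) = (1-p)^M := by
    rw [Finset.sum_ite_eq' (Finset.range (M+1)) 0 (fun _ => (1-p:ℝ)^M)]
    simp
  rw [this]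
  simp


/-- Two-sided bound on `1 - (1-p)^m` in terms of `min (m*p) 1`. -/
lemma one_sub_pow_bounds {m : ℕ} {p : ℝ} (hp0 : 0 ≤ p) (hp1 : p ≤ 1) :
    Real.exp (-1) * min ((m:ℝ)*p) 1 ≤ 1 - (1-p)^m ∧ 1 - (1-p)^m ≤ min ((m:ℝ)*p) 1 := by
  set x : ℝ := (m:ℝ) * p with hxdef
  have hx0 : 0 ≤ x := by positivity
  have hpow : (1 - p)^m ≤ Real.exp (-x) := by
    have h1 : (1 - p) ≤ Real.exp (-p) := by
      have := Real.add_one_le_exp (-p); linarith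
    calc (1 - p)^m ≤ (Real.exp (-p))^m := pow_le_pow_left₀ (by linarith) h1 m
      _ = Real.exp ((m : ℝ) * (-p)) := (Real.exp_nat_mul _ _).symm
      _ = Real.exp (-x) := by rw [hxdef]; ring_nf
  constructor
  · have hid : Real.exp (-x) * Real.exp x = 1 := by rw [← Real.exp_add]; simp
    rcases le_total x 1 with hx1 | hx1
    · rw [min_eq_left hx1]
      have hm : Real.exp (-1) ≤ Real.exp (-x) := Real.exp_le_exp.2 (by linarith)
      have hkey := mul_le_mul_of_nonneg_left (Real.add_one_le_exp x) (Real.exp_pos (-x)).le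
      nlinarith [Real.exp_pos (-x)]
    · rw [min_eq_right hx1]
      have hm : Real.exp (-x) ≤ Real.exp (-1) := Real.exp_le_exp.2 (by linarith)
      have hid1 : Real.exp (-1) * Real.exp 1 = 1 := by rw [← Real.exp_add]; simp
      have h2e : (2:ℝ) ≤ Real.exp 1 := by
        have := Real.add_one_le_exp (1:ℝ); linarith
      nlinarith [Real.exp_pos (-1)]
  · refine le_min ?_ (by nlinarith [pow_nonneg (by linarith : (0:ℝ) ≤ 1 - p) m])
    have h2 : 1 - (m : ℝ) * p ≤ (1 - p)^m := by
      calc 1 - (m : ℝ) * p = 1 + (m : ℝ) * (-p) := by ring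
        _ ≤ (1 + -p)^m := one_add_mul_le_pow (by linarith) m
        _ = (1 - p)^m := by ring_nf
    rw [hxdef]; linarith

lemma tail_add_low (M : ℕ) (p t : ℝ) :
    binomUpperTail M p t
      + (∑ k ∈ Finset.range (M+1),
          if t ≤ (k : ℝ) then 0 else (M.choose k : ℝ) * p ^ k * (1 - p) ^ (M - k)) = 1 := by
  rw [binomUpperTail, ← Finset.sum_add_distrib]
  have : ∀ k ∈ Finset.range (M+1),
      ((if t ≤ (k:ℝ) then (M.choose k : ℝ) * p ^ k * (1 - p) ^ (M - k) else 0)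
        + if t ≤ (k : ℝ) then 0 else (M.choose k : ℝ) * p ^ k * (1 - p) ^ (M - k))
      = (M.choose k : ℝ) * p ^ k * (1 - p) ^ (M - k) := by
    intro k _; split <;> ring
  rw [Finset.sum_congr rfl this, binom_sum]
  simp


/-- binomial upper-tail exponent.  If `Ω_N ~ Bin(M_N, p_N)` with
`(1/N) ln M_N → h ≥ 0` and `(1/N) ln p_N → −R`, `R > 0`, then for `b < [h−R]_+` one has
`(1/N) ln Pr{Ω_N ≥ e^{Nb}} → −[R−h]_+`, whereas for `b > [h−R]_+` the probability decays
super-exponentially (for every `C`, eventually `Pr{Ω_N ≥ e^{Nb}} ≤ e^{−NC}`, i.e.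
`(1/N) ln Pr{Ω_N ≥ e^{Nb}} → −∞`). -/
theorem stmt16 (M : ℕ → ℕ) (p : ℕ → ℝ) (hM1 : ∀ N, 1 ≤ M N)
    (hp : ∀ N, p N ∈ Set.Icc (0 : ℝ) 1)
    (h R : ℝ) (hh : 0 ≤ h) (hR : 0 < R)
    (hM : Tendsto (fun N : ℕ => (1 / (N : ℝ)) * Real.log (M N)) atTop (nhds h))
    (hpl : Tendsto (fun N : ℕ => (1 / (N : ℝ)) * Real.log (p N)) atTop (nhds (-R)))
    (b : ℝ) :
    (b < max (h - R) 0 →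
      Tendsto
        (fun N : ℕ =>
          (1 / (N : ℝ)) * Real.log (binomUpperTail (M N) (p N) (Real.exp (N * b))))
        atTop (nhds (-max (R - h) 0))) ∧
    (max (h - R) 0 < b →
      ∀ C : ℝ, ∀ᶠ N : ℕ in atTop,
        binomUpperTail (M N) (p N) (Real.exp (N * b)) ≤ Real.exp (-(N * C))) := by
  set ℓ : ℕ → ℝ := fun N => (1 / (N : ℝ)) * Real.log (M N) + (1 / (N : ℝ)) * Real.log (p N)
    with hℓdef
  have hℓ : Tendsto ℓ atTop (nhds (h - R)) := by
    have := hM.add hpl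
    rwa [← sub_eq_add_neg] at this
  -- basic eventual facts
  have hE : ∀ᶠ N : ℕ in atTop, 1 ≤ N ∧ 0 < p N ∧
      ((M N : ℝ) * p N) = Real.exp ((N : ℝ) * ℓ N) := by
    filter_upwards [hpl.eventually_lt_const (show -R < -R/2 by linarith),
      eventually_ge_atTop 1] with N h1 h2
    have hN0 : (0:ℝ) < (N:ℝ) := by exact_mod_cast h2
    have hlogp : Real.log (p N) < 0 := by
      by_contra hc
      push_neg at hc
      have : 0 ≤ (1 / (N : ℝ)) * Real.log (p N) := mul_nonneg (by positivity) hc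
      linarith
    have hppos : 0 < p N := by
      rcases (hp N).1.lt_or_eq with h | h
      · exact h
      · exfalso; rw [← h, Real.log_zero] at hlogp; exact lt_irrefl 0 hlogp
    refine ⟨h2, hppos, ?_⟩
    have hMpos : (0:ℝ) < (M N : ℝ) := by exact_mod_cast (hM1 N)
    have : (N:ℝ) * ℓ N = Real.log ((M N : ℝ) * p N) := by
      rw [hℓdef]
      rw [Real.log_mul (ne_of_gt hMpos) (ne_of_gt hppos)]
      field_simp
    rw [this, Real.exp_log (mul_pos hMpos hppos)]
  constructor
  · -- Part 1
    intro hb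
    by_cases hcase : h ≤ R
    · -- Case A : h ≤ R, so b < 0 and target is h - R
      have hmax : max (h - R) 0 = 0 := max_eq_right (by linarith)
      have hb0 : b < 0 := by rwa [hmax] at hb
      have htarget : -max (R - h) 0 = h - R := by
        rw [max_eq_left (by linarith)]; ring
      rw [htarget]
      have hupper : Tendsto (fun N : ℕ => min (ℓ N) 0) atTop (nhds (h - R)) := by
        have := hℓ.min (tendsto_const_nhds (x := (0:ℝ)))
        rwa [min_eq_left (by linarith : h - R ≤ 0)] at this
      have hlower : Tendsto (fun N : ℕ => min (ℓ N) 0 - 1 / (N:ℝ)) atTop (nhds (h - R)) := by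
        have := hupper.sub tendsto_one_div_atTop_nhds_zero_nat
        simpa using this
      have hbound : ∀ᶠ N : ℕ in atTop,
          min (ℓ N) 0 - 1/(N:ℝ)
            ≤ (1 / (N : ℝ)) * Real.log (binomUpperTail (M N) (p N) (Real.exp (N * b)))
          ∧ (1 / (N : ℝ)) * Real.log (binomUpperTail (M N) (p N) (Real.exp (N * b)))
            ≤ min (ℓ N) 0 := by
        filter_upwards [hE] with N hN
        obtain ⟨hN1, hppos, hxid⟩ := hN
        have hN0 : (0:ℝ) < (N:ℝ) := by exact_mod_cast hN1
        have hp0 := (hp N).1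
        have hp1 := (hp N).2
        set x : ℝ := (M N : ℝ) * p N with hxdef
        have hxpos : 0 < x := by rw [hxid]; exact Real.exp_pos _
        set t : ℝ := Real.exp ((N:ℝ) * b) with htdef
        have ht0 : 0 < t := Real.exp_pos _
        have ht1 : t ≤ 1 := Real.exp_le_one_iff.mpr (by nlinarith)
        have htail : binomUpperTail (M N) (p N) t = 1 - (1 - p N)^(M N) :=
          tail_eq_one_sub ht0 ht1
        have hminpos : 0 < min x 1 := lt_min hxpos one_pos
        obtain ⟨hlb', hub'⟩ := one_sub_pow_bounds (m := M N) hp0 hp1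
        rw [← hxdef] at hlb' hub'
        rw [← htail] at hlb' hub'
        have htailpos : 0 < binomUpperTail (M N) (p N) t :=
          lt_of_lt_of_le (mul_pos (Real.exp_pos _) hminpos) hlb'
        have hlogmin : Real.log (min x 1) = min ((N:ℝ) * ℓ N) 0 := by
          have hlogx : Real.log x = (N:ℝ) * ℓ N := by rw [hxid, Real.log_exp]
          rcases le_total x 1 with hx1 | hx1
          · rw [min_eq_left hx1, hlogx, min_eq_left]
            rw [← hlogx]
            exact Real.log_nonpos hxpos.le hx1
          · rw [min_eq_right hx1, Real.log_one, min_eq_right]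
            rw [← hlogx]
            exact Real.log_nonneg hx1
        have hminℓ : (1/(N:ℝ)) * min ((N:ℝ) * ℓ N) 0 = min (ℓ N) 0 := by
          have hNne : (N:ℝ) ≠ 0 := ne_of_gt hN0
          rcases le_total (ℓ N) 0 with hl | hl
          · rw [min_eq_left (by nlinarith), min_eq_left hl]
            field_simp
          · rw [min_eq_right (by nlinarith), min_eq_right hl]
            simp
        have hlog1 : Real.log (binomUpperTail (M N) (p N) t) ≤ Real.log (min x 1) :=
          Real.log_le_log htailpos hub'
        have hlog2 : -1 + Real.log (min x 1) ≤ Real.log (binomUpperTail (M N) (p N) t) := by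
          have := Real.log_le_log (mul_pos (Real.exp_pos (-1)) hminpos) hlb'
          rwa [Real.log_mul (ne_of_gt (Real.exp_pos _)) (ne_of_gt hminpos),
            Real.log_exp] at this
        constructor
        · calc min (ℓ N) 0 - 1/(N:ℝ)
              = (1/(N:ℝ)) * (-1 + Real.log (min x 1)) := by
                rw [mul_add, hlogmin, hminℓ]; ring
            _ ≤ (1/(N:ℝ)) * Real.log (binomUpperTail (M N) (p N) t) :=
                mul_le_mul_of_nonneg_left hlog2 (by positivity)
        · calc (1/(N:ℝ)) * Real.log (binomUpperTail (M N) (p N) t)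
              ≤ (1/(N:ℝ)) * Real.log (min x 1) :=
                mul_le_mul_of_nonneg_left hlog1 (by positivity)
            _ = min (ℓ N) 0 := by rw [hlogmin, hminℓ]
      exact tendsto_of_tendsto_of_tendsto_of_le_of_le' hlower hupper
        (hbound.mono fun N hN => hN.1) (hbound.mono fun N hN => hN.2)
    · -- Case B : h > R, b < h - R, target 0
      push_neg at hcase
      have hb' : b < h - R := by
        rwa [max_eq_left (by linarith)] at hb
      have htarget : -max (R - h) 0 = 0 := by
        rw [max_eq_right (by linarith)]; ring
      rw [htarget]
      set b₀ : ℝ := max b 0 with hb₀def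
      have hb₀lt : b₀ < h - R := max_lt hb' (by linarith)
      set δ : ℝ := (h - R - b₀)/2 with hδdef
      have hδpos : 0 < δ := by
        have := le_max_right b 0
        simp only [hδdef]
        nlinarith [hb₀lt]
      set c : ℝ := 1 - Real.exp (-1) with hcdef
      have hcpos : 0 < c := by
        have : Real.exp (-1) < 1 := Real.exp_lt_one_iff.mpr (by norm_num)
        simp only [hcdef]; linarith
      have hexpδ : Tendsto (fun N : ℕ => Real.exp ((N:ℝ) * δ)) atTop atTop :=
        Real.tendsto_exp_atTop.comp
          ((tendsto_natCast_atTop_atTop (R := ℝ)).atTop_mul_const hδpos)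
      have hbound : ∀ᶠ N : ℕ in atTop,
          -Real.log 2 * (1/(N:ℝ))
            ≤ (1 / (N : ℝ)) * Real.log (binomUpperTail (M N) (p N) (Real.exp (N * b)))
          ∧ (1 / (N : ℝ)) * Real.log (binomUpperTail (M N) (p N) (Real.exp (N * b)))
            ≤ 0 := by
        filter_upwards [hE, hℓ.eventually_const_lt (show h - R - δ < h - R by linarith),
          hexpδ.eventually_ge_atTop ((1 + Real.log 2)/c)] with N hN hℓN hδN
        obtain ⟨hN1, hppos, hxid⟩ := hN
        have hN0 : (0:ℝ) < (N:ℝ) := by exact_mod_cast hN1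
        have hp0 := (hp N).1
        have hp1 := (hp N).2
        set x : ℝ := (M N : ℝ) * p N with hxdef
        have hxpos : 0 < x := by rw [hxid]; exact Real.exp_pos _
        set t : ℝ := Real.exp ((N:ℝ) * b) with htdef
        -- key estimate : t - c * x ≤ -log 2
        have hkey : t - c * x ≤ -Real.log 2 := by
          have h1 : t ≤ Real.exp ((N:ℝ) * b₀) :=
            Real.exp_le_exp.2 (mul_le_mul_of_nonneg_left (le_max_left b 0) hN0.le)
          have h2 : Real.exp ((N:ℝ) * (b₀ + δ)) ≤ x := by
            rw [hxid]
            exact Real.exp_le_exp.2 (mul_le_mul_of_nonneg_left (by nlinarith) hN0.le)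
          have h3 : Real.exp ((N:ℝ) * (b₀ + δ))
              = Real.exp ((N:ℝ) * b₀) * Real.exp ((N:ℝ) * δ) := by
            rw [← Real.exp_add]; ring_nf
          have h4 : (1 + Real.log 2) ≤ c * Real.exp ((N:ℝ) * δ) := by
            rw [div_le_iff₀ hcpos] at hδN
            nlinarith [hδN]
          have h5 : (1:ℝ) ≤ Real.exp ((N:ℝ) * b₀) :=
            Real.one_le_exp (mul_nonneg hN0.le (le_max_right b 0))
          have h6 : c * x ≥ Real.exp ((N:ℝ) * b₀) * (c * Real.exp ((N:ℝ) * δ)) := by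
            have := mul_le_mul_of_nonneg_left h2 hcpos.le
            rw [h3] at this; nlinarith [Real.exp_pos ((N:ℝ)*b₀)]
          have h7 : Real.exp ((N:ℝ) * b₀) * (c * Real.exp ((N:ℝ) * δ))
              ≥ Real.exp ((N:ℝ) * b₀) * (1 + Real.log 2) := by
            exact mul_le_mul_of_nonneg_left h4 (Real.exp_pos _).le
          have hlog2pos : (0:ℝ) < Real.log 2 := Real.log_pos (by norm_num)
          nlinarith
        -- lower-tail probability bound
        have hlow : (∑ k ∈ Finset.range (M N + 1),
            if t ≤ (k : ℝ) then 0
            else ((M N).choose k : ℝ) * (p N) ^ k * (1 - p N) ^ (M N - k)) ≤ 1/2 := by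
          have hc1 := low_le_chernoff (M := M N) hp0 hp1 1 t (by norm_num)
          have hc2 : (p N * Real.exp (-1) + (1 - p N))^(M N)
              ≤ Real.exp ((M N : ℝ) * (p N * (Real.exp (-1) - 1))) :=
            chernoff_base_pow hp0 hp1 (Real.exp_pos _).le (M N)
          have hc3 : Real.exp (1 * t) * (p N * Real.exp (-1) + (1 - p N))^(M N)
              ≤ Real.exp (t + (M N : ℝ) * (p N * (Real.exp (-1) - 1))) := by
            rw [Real.exp_add, one_mul]
            exact mul_le_mul_of_nonneg_left hc2 (Real.exp_pos _).le
          have hexparg : t + (M N : ℝ) * (p N * (Real.exp (-1) - 1)) ≤ -Real.log 2 := by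
            have : (M N : ℝ) * (p N * (Real.exp (-1) - 1)) = -(c * x) := by
              rw [hcdef, hxdef]; ring
            rw [this]; linarith
          have hc4 : Real.exp (t + (M N : ℝ) * (p N * (Real.exp (-1) - 1))) ≤ 1/2 := by
            calc Real.exp (t + (M N : ℝ) * (p N * (Real.exp (-1) - 1)))
                ≤ Real.exp (-Real.log 2) := Real.exp_le_exp.2 hexparg
              _ = 1/2 := by
                rw [Real.exp_neg, Real.exp_log (by norm_num : (0:ℝ) < 2)]; norm_num
          linarith
        have htube : 1/2 ≤ binomUpperTail (M N) (p N) t := by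
          have := tail_add_low (M N) (p N) t
          linarith
        have htub : binomUpperTail (M N) (p N) t ≤ 1 := by
          have := tail_add_low (M N) (p N) t
          have h2 : 0 ≤ ∑ k ∈ Finset.range (M N + 1),
              if t ≤ (k : ℝ) then 0
              else ((M N).choose k : ℝ) * (p N) ^ k * (1 - p N) ^ (M N - k) :=
            Finset.sum_nonneg fun k _ => by
              split
              · exact le_refl _
              · exact term_nonneg hp0 hp1 k
          linarith
        have htailpos : 0 < binomUpperTail (M N) (p N) t := by linarith
        constructor
        · have hlog : Real.log (1/2) ≤ Real.log (binomUpperTail (M N) (p N) t) :=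
            Real.log_le_log (by norm_num) htube
          have : Real.log (1/2 : ℝ) = -Real.log 2 := by
            rw [one_div, Real.log_inv]
          rw [this] at hlog
          calc -Real.log 2 * (1/(N:ℝ)) = (1/(N:ℝ)) * (-Real.log 2) := by ring
            _ ≤ (1/(N:ℝ)) * Real.log (binomUpperTail (M N) (p N) t) :=
                mul_le_mul_of_nonneg_left hlog (by positivity)
        · have hlog : Real.log (binomUpperTail (M N) (p N) t) ≤ 0 :=
            Real.log_nonpos htailpos.le htub
          exact mul_nonpos_of_nonneg_of_nonpos (by positivity) hlog
      have hlower : Tendsto (fun N : ℕ => -Real.log 2 * (1/(N:ℝ))) atTop (nhds 0) := by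
        have := tendsto_one_div_atTop_nhds_zero_nat.const_mul (-Real.log 2)
        simpa using this
      exact tendsto_of_tendsto_of_tendsto_of_le_of_le' hlower tendsto_const_nhds
        (hbound.mono fun N hN => hN.1) (hbound.mono fun N hN => hN.2)
  · -- Part 2
    intro hb C
    have hbpos : 0 < b := lt_of_le_of_lt (le_max_right _ _) hb
    have hbhr : h - R < b := lt_of_le_of_lt (le_max_left _ _) hb
    set b' : ℝ := (h - R + b)/2 with hb'def
    have hb'lt : b' < b := by simp only [hb'def]; linarith
    have hℓb' : h - R < b' := by simp only [hb'def]; linarith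
    have he1 : (2:ℝ) ≤ Real.exp 1 := by
      have := Real.add_one_le_exp (1:ℝ); linarith
    have hexp1 : Tendsto (fun N : ℕ => Real.exp ((N:ℝ) * (b - b'))) atTop atTop :=
      Real.tendsto_exp_atTop.comp
        ((tendsto_natCast_atTop_atTop (R := ℝ)).atTop_mul_const (by linarith))
    have hexp2 : Tendsto (fun N : ℕ => Real.exp ((N:ℝ) * b) / (N:ℝ)) atTop atTop := by
      have h1 : Tendsto (fun y : ℝ => Real.exp y / y) atTop atTop := by
        have := Real.tendsto_exp_div_pow_atTop 1
        simpa using this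
      have h2 : Tendsto (fun N : ℕ => Real.exp ((N:ℝ)*b) / ((N:ℝ)*b)) atTop atTop :=
        h1.comp ((tendsto_natCast_atTop_atTop (R := ℝ)).atTop_mul_const hbpos)
      have h3 := h2.atTop_mul_const hbpos
      refine h3.congr' ?_
      filter_upwards [eventually_ge_atTop 1] with N hN1
      have hN0 : (0:ℝ) < (N:ℝ) := by exact_mod_cast hN1
      field_simp
    filter_upwards [hE, hℓ.eventually_lt_const hℓb',
      hexp1.eventually_ge_atTop (2 * (Real.exp 1 - 1)),
      hexp2.eventually_ge_atTop (2 * C)] with N hN hℓN hg1 hg2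
    obtain ⟨hN1, hppos, hxid⟩ := hN
    have hN0 : (0:ℝ) < (N:ℝ) := by exact_mod_cast hN1
    have hp0 := (hp N).1
    have hp1 := (hp N).2
    set x : ℝ := (M N : ℝ) * p N with hxdef
    set t : ℝ := Real.exp ((N:ℝ) * b) with htdef
    -- x*(e-1) - t ≤ -(N*C)
    have hx_le : x ≤ Real.exp ((N:ℝ) * b') := by
      rw [hxid]
      exact Real.exp_le_exp.2 (mul_le_mul_of_nonneg_left hℓN.le hN0.le)
    have hsplit : t = Real.exp ((N:ℝ) * b') * Real.exp ((N:ℝ) * (b - b')) := by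
      rw [htdef, ← Real.exp_add]; ring_nf
    have hkey : x * (Real.exp 1 - 1) ≤ t / 2 := by
      have h1 : x * (Real.exp 1 - 1) ≤ Real.exp ((N:ℝ)*b') * (Real.exp 1 - 1) :=
        mul_le_mul_of_nonneg_right hx_le (by linarith)
      have h2 : Real.exp ((N:ℝ)*b') * (2 * (Real.exp 1 - 1))
          ≤ Real.exp ((N:ℝ)*b') * Real.exp ((N:ℝ)*(b-b')) :=
        mul_le_mul_of_nonneg_left hg1 (Real.exp_pos _).le
      rw [← hsplit] at h2
      nlinarith [Real.exp_pos ((N:ℝ)*b')]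
    have htC : (N:ℝ) * C ≤ t / 2 := by
      rw [le_div_iff₀ hN0] at hg2
      nlinarith
    have harg : x * (Real.exp 1 - 1) - t ≤ -((N:ℝ) * C) := by linarith
    -- now the Chernoff bound
    have hc1 := tail_le_chernoff (M := M N) hp0 hp1 1 t (by norm_num)
    have hc2 : (p N * Real.exp 1 + (1 - p N))^(M N)
        ≤ Real.exp ((M N : ℝ) * (p N * (Real.exp 1 - 1))) :=
      chernoff_base_pow hp0 hp1 (Real.exp_pos _).le (M N)
    have hc3 : Real.exp (-(1 * t)) * (p N * Real.exp 1 + (1 - p N))^(M N)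
        ≤ Real.exp (x * (Real.exp 1 - 1) - t) := by
      have := mul_le_mul_of_nonneg_left hc2 (Real.exp_pos (-(1*t))).le
      refine this.trans_eq ?_
      rw [← Real.exp_add, hxdef]
      congr 1
      ring
    calc binomUpperTail (M N) (p N) t
        ≤ Real.exp (-(1 * t)) * (p N * Real.exp 1 + (1 - p N))^(M N) := hc1
      _ ≤ Real.exp (x * (Real.exp 1 - 1) - t) := hc3
      _ ≤ Real.exp (-((N:ℝ) * C)) := Real.exp_le_exp.2 harg
end
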